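/- arXiv:2210.02988 — 7 statements merged into one kernel-verified Lean document; each statement's English description precedes it below -/
import Mathlib

section
/- Let G be an amply regular graph with parameters (n, d, α, β) with β > α ≥ 1, and let xy ∈ E. Then the transport-bipartite graph H of xy is (β-1)-regular. -/
variable {V : Type*}

/-- An amply regular graph with parameters `(n, d, a, b)`. -/
def IsAmplyRegular (G : SimpleGraph V) [Fintype V] [DecidableEq V] [DecidableRel G.Adj]
    (n d a b : ℕ) : Prop :=
  Fintype.card V = n ∧ G.IsRegularOfDegree d ∧
  (∀ x y : V, G.Adj x y → (G.neighborFinset x ∩ G.neighborFinset y).card = a) ∧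
  (∀ x y : V, G.dist x y = 2 → (G.neighborFinset x ∩ G.neighborFinset y).card = b)

/-- `N_x = Γ(x) \\ ({y} ∪ Γ(y))`: the neighbors of `x` other than `y` and not adjacent
to `y`. (`N_y` is `Nside G y x`.) -/
def Nside (G : SimpleGraph V) [Fintype V] [DecidableEq V] [DecidableRel G.Adj] (x y : V) :
    Finset V := G.neighborFinset x \ insert y (G.neighborFinset y)

/-- `Δ_{xy} = Γ(x) ∩ Γ(y)`: the common neighbors of `x` and `y`. -/
def Delta (G : SimpleGraph V) [Fintype V] [DecidableEq V] [DecidableRel G.Adj] (x y : V) :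
    Finset V := G.neighborFinset x ∩ G.neighborFinset y

/-- The `X`-side of the transport-bipartite graph of the edge `xy`:
`N_x ∪ Δ_{xy}` together with `m = β - α - 1` copies `x_1, …, x_m` of `x`. -/
abbrev TBX (G : SimpleGraph V) [Fintype V] [DecidableEq V] [DecidableRel G.Adj]
    (x y : V) (m : ℕ) :=
  {v : V // v ∈ Nside G x y ∪ Delta G x y} ⊕ Fin m

/-- The `Y`-side of the transport-bipartite graph of the edge `xy`:
`N_y ∪ Δ'_{xy}` together with `m = β - α - 1` copies `x'_1, …, x'_m` of `x`,
where `Δ'_{xy}` is a primed copy of `Δ_{xy}`. -/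
abbrev TBY (G : SimpleGraph V) [Fintype V] [DecidableEq V] [DecidableRel G.Adj]
    (x y : V) (m : ℕ) :=
  {v : V // v ∈ Nside G y x ∪ Delta G x y} ⊕ Fin m

/-- The edges of the transport-bipartite graph, from the `X`-side to the `Y`-side:
`E_1`-`E_3` and `E_5` are edges of `G` between `N_x ∪ Δ_{xy}` and `N_y ∪ Δ'_{xy}`;
`E_4` joins `z_i` to its primed copy `z'_i`; `E_6`-`E_8` join the copies of `x` to
everything in `Δ'_{xy}`, `Δ_{xy}` and the other copies respectively. -/
def tbAux (G : SimpleGraph V) [Fintype V] [DecidableEq V] [DecidableRel G.Adj]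
    (x y : V) (m : ℕ) (a : TBX G x y m) (b : TBY G x y m) : Prop :=
  match a, b with
  | Sum.inl v, Sum.inl w => G.Adj v.1 w.1 ∨ v.1 = w.1
  | Sum.inl v, Sum.inr _ => v.1 ∈ Delta G x y
  | Sum.inr _, Sum.inl w => w.1 ∈ Delta G x y
  | Sum.inr _, Sum.inr _ => True

/-- The transport-bipartite graph `H` of the edge `xy` (Definition 3.1). -/
def TBGraph (G : SimpleGraph V) [Fintype V] [DecidableEq V] [DecidableRel G.Adj]
    (x y : V) (m : ℕ) : SimpleGraph (TBX G x y m ⊕ TBY G x y m) where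
  Adj a b := match a, b with
    | Sum.inl a, Sum.inr b => tbAux G x y m a b
    | Sum.inr b, Sum.inl a => tbAux G x y m a b
    | _, _ => False
  symm := ⟨by rintro (a | a) (b | b) h <;> first | exact h | exact h.elim⟩
  loopless := ⟨by rintro (a | a) h <;> exact h⟩

noncomputable instance (G : SimpleGraph V) [Fintype V] [DecidableEq V] [DecidableRel G.Adj]
    (x y : V) (m : ℕ) (a : TBX G x y m ⊕ TBY G x y m) :
    Fintype ((TBGraph G x y m).neighborSet a) := Fintype.ofFinite _

/-!
Each vertex of `N_x ∪ Δ_{xy}` is joined in `H` to the closed `G`-neighbourhood of itself inside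
`Γ(y) \ {x}`. For `v ∈ N_x`, which is at distance 2 from `y`, this is `Γ(v) ∩ Γ(y)` minus `x`:
`β - 1` vertices. For `z ∈ Δ_{xy}` it is `z'` together with `Γ(z) ∩ Γ(y)` minus `x`, i.e. `α`
vertices, and the `β - α - 1` copies `x'_i` make up the rest. A copy `x_i` sees `Δ'_{xy}` and the
copies `x'_j`: `α + (β - α - 1)` vertices. The `Y` side is symmetric under `x ↔ y`.
-/

open Finset SimpleGraph

lemma Nat.card_subtype_finset (s : Finset V) (p : V → Prop) [DecidablePred p] :
    Nat.card {w : s // p w} = #{v ∈ s | p v} := by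
  rw [Nat.card_eq_fintype_card, Fintype.card_subtype, univ_eq_attach, filter_attach, card_map,
    card_attach]

lemma Finset.filter_mem_union_right [DecidableEq V] (s t : Finset V) :
    {v ∈ s ∪ t | v ∈ t} = t := by
  rw [filter_mem_eq_inter, inter_eq_right.mpr subset_union_right]

lemma Nat.card_subtype_const_fin (m : ℕ) (c : Prop) [Decidable c] :
    Nat.card {_j : Fin m // c} = if c then m else 0 := by
  split_ifs with hc <;> simp [hc]

namespace SimpleGraph

variable {G : SimpleGraph V} {u v w : V}

lemma dist_eq_two_of_adj_of_adj (huv : G.Adj u v) (hvw : G.Adj v w) (huw : u ≠ w)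
    (hnadj : ¬ G.Adj u w) : G.dist u w = 2 := by
  rw [dist, G.edist_eq_two_iff.mpr ⟨huw, hnadj, v, G.mem_commonNeighbors.mpr ⟨huv, hvw.symm⟩⟩]
  rfl

variable [Fintype V] [DecidableEq V] [DecidableRel G.Adj] {x y : V}

lemma card_filter_closedNbr_of_not_adj (hxv : G.Adj x v) (hxy : G.Adj x y) (hnadj : ¬ G.Adj v y) :
    #{w ∈ G.neighborFinset y \ {x} | G.Adj v w ∨ v = w} =
      #(G.neighborFinset v ∩ G.neighborFinset y) - 1 := by
  have hfilter : {w ∈ G.neighborFinset y \ {x} | G.Adj v w ∨ v = w} =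
      (G.neighborFinset v ∩ G.neighborFinset y).erase x := by
    ext w
    simp only [mem_filter, mem_sdiff, mem_singleton, mem_erase, mem_inter, mem_neighborFinset]
    grind [G.adj_symm]
  rw [hfilter, card_erase_of_mem (by simp [hxv.symm, hxy.symm])]

lemma card_filter_closedNbr_of_adj (hxv : G.Adj x v) (hxy : G.Adj x y) (hvy : G.Adj v y) :
    #{w ∈ G.neighborFinset y \ {x} | G.Adj v w ∨ v = w} =
      #(G.neighborFinset v ∩ G.neighborFinset y) := by
  have hfilter : {w ∈ G.neighborFinset y \ {x} | G.Adj v w ∨ v = w} =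
      insert v ((G.neighborFinset v ∩ G.neighborFinset y).erase x) := by
    ext w
    simp only [mem_filter, mem_sdiff, mem_singleton, mem_insert, mem_erase, mem_inter,
      mem_neighborFinset]
    grind [G.adj_symm, hxv.ne]
  have hx : x ∈ G.neighborFinset v ∩ G.neighborFinset y := by simp [hxv.symm, hxy.symm]
  rw [hfilter, card_insert_of_notMem (by simp), card_erase_add_one hx]

lemma card_filter_closedNbr_add_ite {α β : ℕ}
    (hα : ∀ u w, G.Adj u w → #(G.neighborFinset u ∩ G.neighborFinset w) = α)
    (hβ : ∀ u w, G.dist u w = 2 → #(G.neighborFinset u ∩ G.neighborFinset w) = β)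
    (hβα : α < β) (hxv : G.Adj x v) (hxy : G.Adj x y) (hvy : v ≠ y) :
    #{w ∈ G.neighborFinset y \ {x} | G.Adj v w ∨ v = w} + (if G.Adj v y then β - α - 1 else 0)
      = β - 1 := by
  by_cases hadj : G.Adj v y
  · rw [card_filter_closedNbr_of_adj hxv hxy hadj, hα v y hadj, if_pos hadj]
    omega
  · rw [card_filter_closedNbr_of_not_adj hxv hxy hadj,
      hβ v y (dist_eq_two_of_adj_of_adj hxv.symm hxy hvy hadj), if_neg hadj, add_zero]

end SimpleGraph

section TBGraph

variable {G : SimpleGraph V} [Fintype V] [DecidableEq V] [DecidableRel G.Adj] {x y v : V} {m : ℕ}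

lemma mem_Delta_iff_adj_right (hxv : G.Adj x v) : v ∈ Delta G x y ↔ G.Adj v y := by
  simp [Delta, hxv, G.adj_comm y]

lemma mem_Delta_iff_adj_left (hyv : G.Adj y v) : v ∈ Delta G x y ↔ G.Adj v x := by
  simp [Delta, hyv, G.adj_comm x]

lemma mem_Nside_union_Delta :
    v ∈ Nside G x y ∪ Delta G x y ↔ G.Adj x v ∧ v ≠ y := by
  simp only [Nside, Delta, mem_union, mem_sdiff, mem_insert, mem_inter, mem_neighborFinset]
  grind [G.adj_symm, G.irrefl]

lemma mem_Nside_union_Delta_swap : v ∈ Nside G y x ∪ Delta G x y ↔ G.Adj y v ∧ v ≠ x := by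
  rw [Delta, inter_comm]
  exact mem_Nside_union_Delta

lemma TBGraph.degree_inl (a : TBX G x y m) :
    (TBGraph G x y m).degree (.inl a) = Nat.card {b // tbAux G x y m a b} := by
  have : (TBGraph G x y m).neighborSet (.inl a) = Sum.inr '' {b | tbAux G x y m a b} := by
    ext (b | b) <;> simp [TBGraph]
  rw [← card_neighborSet_eq_degree, ← Nat.card_eq_fintype_card, this,
    Nat.card_image_of_injective Sum.inr_injective]
  rfl

lemma TBGraph.degree_inr (b : TBY G x y m) :
    (TBGraph G x y m).degree (.inr b) = Nat.card {a // tbAux G x y m a b} := by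
  have : (TBGraph G x y m).neighborSet (.inr b) = Sum.inl '' {a | tbAux G x y m a b} := by
    ext (a | a) <;> simp [TBGraph]
  rw [← card_neighborSet_eq_degree, ← Nat.card_eq_fintype_card, this,
    Nat.card_image_of_injective Sum.inl_injective]
  rfl

lemma Nside_union_Delta_eq : Nside G x y ∪ Delta G x y = G.neighborFinset x \ {y} := by
  ext v
  rw [mem_Nside_union_Delta]
  simp

lemma Nside_union_Delta_swap_eq : Nside G y x ∪ Delta G x y = G.neighborFinset y \ {x} := by
  ext v
  rw [mem_Nside_union_Delta_swap]
  simp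

lemma TBGraph.degree_inl_inl (v : {v // v ∈ Nside G x y ∪ Delta G x y}) :
    (TBGraph G x y m).degree (.inl (.inl v)) =
      #{w ∈ G.neighborFinset y \ {x} | G.Adj v w ∨ v = w} + if G.Adj v y then m else 0 := by
  have hxv := (mem_Nside_union_Delta.1 v.2).1
  rw [TBGraph.degree_inl, Nat.card_congr Equiv.subtypeSum, Nat.card_sum,
    ← Nside_union_Delta_swap_eq]
  simp only [← mem_Delta_iff_adj_right (y := y) hxv]
  exact congrArg₂ (· + ·) (Nat.card_subtype_finset _ fun w => G.Adj v w ∨ v = w)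
    (Nat.card_subtype_const_fin m (v.1 ∈ Delta G x y))

lemma TBGraph.degree_inr_inl (w : {w // w ∈ Nside G y x ∪ Delta G x y}) :
    (TBGraph G x y m).degree (.inr (.inl w)) =
      #{v ∈ G.neighborFinset x \ {y} | G.Adj w v ∨ w = v} + if G.Adj w x then m else 0 := by
  have hΔ := mem_Delta_iff_adj_left (x := x) (mem_Nside_union_Delta_swap.1 w.2).1
  rw [TBGraph.degree_inr, Nat.card_congr Equiv.subtypeSum, Nat.card_sum, ← Nside_union_Delta_eq]
  simp only [← hΔ]
  refine congrArg₂ (· + ·) ((Nat.card_subtype_finset _ fun v => G.Adj v w ∨ v = w).trans ?_)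
    (Nat.card_subtype_const_fin m (w.1 ∈ Delta G x y))
  exact congrArg card (filter_congr fun v _ => by rw [G.adj_comm, eq_comm])

lemma TBGraph.degree_inl_inr (i : Fin m) :
    (TBGraph G x y m).degree (.inl (.inr i)) = #(Delta G x y) + m := by
  rw [TBGraph.degree_inl, Nat.card_congr Equiv.subtypeSum, Nat.card_sum]
  exact congrArg₂ (· + ·) ((Nat.card_subtype_finset _ (· ∈ Delta G x y)).trans
    (congrArg card (filter_mem_union_right _ _))) (by simp [tbAux])

lemma TBGraph.degree_inr_inr (j : Fin m) :
    (TBGraph G x y m).degree (.inr (.inr j)) = #(Delta G x y) + m := by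
  rw [TBGraph.degree_inr, Nat.card_congr Equiv.subtypeSum, Nat.card_sum]
  exact congrArg₂ (· + ·) ((Nat.card_subtype_finset _ (· ∈ Delta G x y)).trans
    (congrArg card (filter_mem_union_right _ _))) (by simp [tbAux])

end TBGraph

theorem stmt5_general [Fintype V] [DecidableEq V] (G : SimpleGraph V) [DecidableRel G.Adj]
    (n d α β : ℕ) (h : IsAmplyRegular G n d α β) (hβα : α < β)
    (x y : V) (hxy : G.Adj x y) :
    (TBGraph G x y (β - α - 1)).IsRegularOfDegree (β - 1) := by
  obtain ⟨-, -, hα, hβ⟩ := h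
  have hΔ : #(Delta G x y) = α := hα x y hxy
  rintro ((v | i) | (w | j))
  · obtain ⟨hxv, hvy⟩ := mem_Nside_union_Delta.1 v.2
    rw [TBGraph.degree_inl_inl]
    exact card_filter_closedNbr_add_ite hα hβ hβα hxv hxy hvy
  · rw [TBGraph.degree_inl_inr, hΔ]
    omega
  · obtain ⟨hyw, hwx⟩ := mem_Nside_union_Delta_swap.1 w.2
    rw [TBGraph.degree_inr_inl]
    exact card_filter_closedNbr_add_ite hα hβ hβα hyw hxy.symm hwx
  · rw [TBGraph.degree_inr_inr, hΔ]
    omega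

/-- The transport-bipartite graph of an edge of an amply regular graph with `β > α ≥ 1`
is `(β - 1)`-regular. -/
theorem stmt5 [Fintype V] [DecidableEq V] (G : SimpleGraph V) [DecidableRel G.Adj]
    (n d α β : ℕ) (h : IsAmplyRegular G n d α β) (hβα : α < β) (hα : 1 ≤ α)
    (x y : V) (hxy : G.Adj x y) :
    (TBGraph G x y (β - α - 1)).IsRegularOfDegree (β - 1) :=
  stmt5_general G n d α β h hβα x y hxy
end

section
/- Let G be an amply regular graph with parameters (n, d, α, β), β > α ≥ 1, let xy ∈ E, let H be the transport-bipartite graph of xy, and let M be a perfect matching of H. Then the relation 'v and w are reachable in M' defines a well-defined bijection φ : N_x → N_y (i.e., for each v ∈ N_x there is a unique w ∈ N_y reachable from v in M, and φ is one-to-one and onto). -/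
variable {V : Type*}

/-- `Primed t t'` says the `Y`-side vertex `t'` is the primed copy of the `X`-side
vertex `t` (so necessarily `t ∈ Δ_{xy} ∪ {x_1, …, x_m}`). -/
def Primed (G : SimpleGraph V) [Fintype V] [DecidableEq V] [DecidableRel G.Adj]
    (x y : V) (m : ℕ) : TBX G x y m → TBY G x y m → Prop
  | Sum.inl v, Sum.inl w => v.1 = w.1
  | Sum.inr i, Sum.inr j => i = j
  | _, _ => False

/-- The `X`-side vertices lying in `N_x`. -/
def IsNx (G : SimpleGraph V) [Fintype V] [DecidableEq V] [DecidableRel G.Adj]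
    (x y : V) (m : ℕ) : TBX G x y m → Prop
  | Sum.inl v => v.1 ∈ Nside G x y
  | Sum.inr _ => False

/-- The `Y`-side vertices lying in `N_y`. -/
def IsNy (G : SimpleGraph V) [Fintype V] [DecidableEq V] [DecidableRel G.Adj]
    (x y : V) (m : ℕ) : TBY G x y m → Prop
  | Sum.inl v => v.1 ∈ Nside G y x
  | Sum.inr _ => False

/-- `v` and `w` are reachable in the perfect matching `M`: either `vw ∈ M`, or there is a
chain `v t'_1, t_1 t'_2, …, t_j w` of edges of `M`, where `t'_i` is the primed copy of
`t_i`. -/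
inductive ReachM (G : SimpleGraph V) [Fintype V] [DecidableEq V] [DecidableRel G.Adj]
    (x y : V) (m : ℕ) (M : (TBGraph G x y m).Subgraph) :
    TBX G x y m → TBY G x y m → Prop
  | base {a w} : M.Adj (Sum.inl a) (Sum.inr w) → ReachM G x y m M a w
  | step {a t t' w} : M.Adj (Sum.inl a) (Sum.inr t') → Primed G x y m t t' →
      ReachM G x y m M t w → ReachM G x y m M a w

/-!
The perfect matching `M` is a bijection `X → Y`, and priming is a bijection from
`X \ N_x` onto `Y \ N_y`. Reachability follows `M` and then un-primes, until it lands in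
`N_y`. If some `v ∈ N_x` never landed there, the set of vertices that never land in `N_y`
would be mapped injectively into itself by this step; being finite, it would be mapped onto
itself, yet `v` has no primed copy and so is not the image of anything. This gives `φ`;
running the same argument with the inverse bijections shows that `φ` is onto, and uniqueness
in either direction holds because each step is determined by the previous one.
-/

open Relator

variable {X Y : Type*}

inductive ChainReach (μ P : X → Y → Prop) : X → Y → Prop
  | base {a w} : μ a w → ChainReach μ P a w
  | step {a t t' w} : μ a t' → P t t' → ChainReach μ P t w → ChainReach μ P a w

namespace ChainReach

variable {μ P : X → Y → Prop}

theorem snoc {a t : X} {s w : Y} (h : ChainReach μ P a s) (hP : P t s) (hμ : μ t w) :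
    ChainReach μ P a w := by
  induction h with
  | base has => exact step has hP (base hμ)
  | step hμ' hP' _ ih => exact step hμ' hP' (ih hP)

theorem reverse {a : X} {w : Y} (h : ChainReach μ P a w) :
    ChainReach (flip μ) (flip P) w a := by
  induction h with
  | base h => exact base h
  | step hμ hP _ ih => exact ih.snoc hP hμ

theorem target_unique (hμ : RightUnique μ) (hP : LeftUnique P) {a : X} {w₁ w₂ : Y}
    (h₁ : ChainReach μ P a w₁) (h₂ : ChainReach μ P a w₂)
    (hw₁ : ∀ t, ¬ P t w₁) (hw₂ : ∀ t, ¬ P t w₂) : w₁ = w₂ := by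
  induction h₁ with
  | base hμ₁ =>
    cases h₂ with
    | base hμ₂ => exact hμ hμ₁ hμ₂
    | step hμ₂ hP₂ _ => exact absurd (hμ hμ₂ hμ₁ ▸ hP₂) (hw₁ _)
  | step hμ₁ hP₁ _ ih =>
    cases h₂ with
    | base hμ₂ => exact absurd (hμ hμ₁ hμ₂ ▸ hP₁) (hw₂ _)
    | step hμ₂ hP₂ h₂ =>
      cases hμ hμ₁ hμ₂
      cases hP hP₁ hP₂
      exact ih h₂ hw₁

theorem source_unique (hμ : LeftUnique μ) (hP : RightUnique P) {a₁ a₂ : X} {w : Y}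
    (h₁ : ChainReach μ P a₁ w) (h₂ : ChainReach μ P a₂ w)
    (ha₁ : ∀ t, ¬ P a₁ t) (ha₂ : ∀ t, ¬ P a₂ t) : a₁ = a₂ :=
  target_unique (P := flip P) hμ.flip (fun _ _ _ h h' => hP h h') h₁.reverse h₂.reverse ha₁ ha₂

theorem exists_target [Finite X] (hμt : LeftTotal μ) (hμ : LeftUnique μ) (hP : RightUnique P)
    {a : X} (ha : ∀ t, ¬ P a t) : ∃ w, (∀ t, ¬ P t w) ∧ ChainReach μ P a w := by
  by_contra ha_stuck
  let Stuck := {b : X // ¬ ∃ w, (∀ t, ¬ P t w) ∧ ChainReach μ P b w}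
  have next : ∀ b : Stuck, ∃ c : Stuck, ∃ w, μ b w ∧ P c w := by
    rintro ⟨b, hb⟩
    obtain ⟨w, hbw⟩ := hμt b
    obtain ⟨c, hcw⟩ : ∃ c, P c w := by
      by_contra! hw
      exact hb ⟨w, hw, base hbw⟩
    exact ⟨⟨c, fun ⟨w', hw', hc⟩ => hb ⟨w', hw', step hbw hcw hc⟩⟩, w, hbw, hcw⟩
  choose f w hμf hPf using next
  have hf : Function.Injective f := fun b₁ b₂ hb =>
    Subtype.ext (hμ (hμf b₁) (hP (hPf b₂) (hb ▸ hPf b₁) ▸ hμf b₂))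
  obtain ⟨b, hb⟩ := Finite.surjective_of_injective hf ⟨a, ha_stuck⟩
  exact ha _ (congrArg Subtype.val hb ▸ hPf b)

theorem exists_source [Finite Y] (hμt : RightTotal μ) (hμ : RightUnique μ) (hP : LeftUnique P)
    {w : Y} (hw : ∀ t, ¬ P t w) : ∃ a, (∀ t, ¬ P a t) ∧ ChainReach μ P a w := by
  obtain ⟨a, ha, h⟩ := exists_target hμt (fun _ _ _ h h' => hμ h h') hP.flip hw
  exact ⟨a, ha, h.reverse⟩

end ChainReach

namespace SimpleGraph.Subgraph.IsPerfectMatching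

variable {G : SimpleGraph (X ⊕ Y)} {M : G.Subgraph}

theorem biTotal_adj_inl_inr (hM : M.IsPerfectMatching) (hG : G ≤ completeBipartiteGraph X Y) :
    BiTotal fun a w => M.Adj (.inl a) (.inr w) := by
  rw [isPerfectMatching_iff] at hM
  constructor
  · intro a
    obtain ⟨_ | w, h, -⟩ := hM (.inl a)
    · simpa using hG (M.adj_sub h)
    · exact ⟨w, h⟩
  · intro w
    obtain ⟨a | _, h, -⟩ := hM (.inr w)
    · exact ⟨_, h.symm⟩
    · simpa using hG (M.adj_sub h)

theorem biUnique_adj_inl_inr (hM : M.IsPerfectMatching) :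
    BiUnique fun a w => M.Adj (.inl a) (.inr w) := by
  rw [isPerfectMatching_iff] at hM
  constructor
  · intro a₁ a₂ w h₁ h₂
    obtain ⟨_, -, hu⟩ := hM (.inr w)
    exact Sum.inl_injective ((hu _ h₁.symm).trans (hu _ h₂.symm).symm)
  · intro a w₁ w₂ h₁ h₂
    obtain ⟨_, -, hu⟩ := hM (.inl a)
    exact Sum.inr_injective ((hu _ h₁).trans (hu _ h₂).symm)

end SimpleGraph.Subgraph.IsPerfectMatching

section TransportBipartite

variable [Fintype V] [DecidableEq V] (G : SimpleGraph V) [DecidableRel G.Adj] (x y : V) (m : ℕ)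

theorem tbGraph_le_completeBipartiteGraph :
    TBGraph G x y m ≤ completeBipartiteGraph (TBX G x y m) (TBY G x y m) := by
  rintro (a | a) (b | b) h <;> simp_all [TBGraph]

theorem delta_comm : Delta G x y = Delta G y x :=
  Finset.inter_comm _ _

theorem disjoint_nside_nside_union_delta :
    Disjoint (Nside G x y) (Nside G y x ∪ Delta G x y) := by
  rw [Finset.disjoint_left]
  simp only [Nside, Delta, Finset.mem_sdiff, Finset.mem_union, Finset.mem_inter,
    Finset.mem_insert, SimpleGraph.mem_neighborFinset]
  tauto

theorem primed_biUnique : BiUnique (Primed G x y m) := by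
  constructor
  · rintro (a | a) (b | b) (c | c) h₁ h₂ <;> simp only [Primed] at h₁ h₂ <;> grind
  · rintro (a | a) (b | b) (c | c) h₁ h₂ <;> simp only [Primed] at h₁ h₂ <;> grind

theorem isNx_iff_forall_not_primed (a : TBX G x y m) :
    IsNx G x y m a ↔ ∀ t, ¬ Primed G x y m a t := by
  rcases a with ⟨v, hv⟩ | i
  · refine ⟨?_, fun h => by_contra fun hvN => h (.inl ⟨v, ?_⟩) rfl⟩
    · rintro hvN (⟨w, hw⟩ | j) hvw
      · exact Finset.disjoint_left.1 (disjoint_nside_nside_union_delta G x y) hvN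
          ((hvw : v = w) ▸ hw)
      · exact hvw
    · exact Finset.mem_union_right _ ((Finset.mem_union.1 hv).resolve_left hvN)
  · exact iff_of_false not_false fun h => h (.inr i) rfl

theorem isNy_iff_forall_not_primed (w : TBY G x y m) :
    IsNy G x y m w ↔ ∀ t, ¬ Primed G x y m t w := by
  rcases w with ⟨v, hv⟩ | i
  · refine ⟨?_, fun h => by_contra fun hvN => h (.inl ⟨v, ?_⟩) rfl⟩
    · rintro hvN (⟨u, hu⟩ | j) huv
      · rw [delta_comm] at hu
        exact Finset.disjoint_left.1 (disjoint_nside_nside_union_delta G y x) hvN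
          ((huv : u = v) ▸ hu)
      · exact huv
    · exact Finset.mem_union_right _ ((Finset.mem_union.1 hv).resolve_left hvN)
  · exact iff_of_false not_false fun h => h (.inr i) rfl

theorem reachM_iff_chainReach {M : (TBGraph G x y m).Subgraph} {a : TBX G x y m}
    {w : TBY G x y m} :
    ReachM G x y m M a w ↔
      ChainReach (fun a w => M.Adj (.inl a) (.inr w)) (Primed G x y m) a w := by
  constructor <;> intro h <;> induction h with
  | base hμ => exact .base hμ
  | step hμ hP _ ih => exact .step hμ hP ih

end TransportBipartite

theorem stmt6_general [Fintype V] [DecidableEq V] (G : SimpleGraph V) [DecidableRel G.Adj]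
    (α β : ℕ) (x y : V)
    (M : (TBGraph G x y (β - α - 1)).Subgraph) (hM : M.IsPerfectMatching) :
    (∀ v, IsNx G x y (β - α - 1) v →
      ∃! w, IsNy G x y (β - α - 1) w ∧ ReachM G x y (β - α - 1) M v w) ∧
    (∀ v₁ v₂ w, IsNx G x y (β - α - 1) v₁ → IsNx G x y (β - α - 1) v₂ →
      IsNy G x y (β - α - 1) w → ReachM G x y (β - α - 1) M v₁ w →
      ReachM G x y (β - α - 1) M v₂ w → v₁ = v₂) ∧
    (∀ w, IsNy G x y (β - α - 1) w →
      ∃ v, IsNx G x y (β - α - 1) v ∧ ReachM G x y (β - α - 1) M v w) := by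
  obtain ⟨hμ_leftTotal, hμ_rightTotal⟩ :=
    hM.biTotal_adj_inl_inr (tbGraph_le_completeBipartiteGraph G x y _)
  obtain ⟨hμ_leftUnique, hμ_rightUnique⟩ := hM.biUnique_adj_inl_inr
  obtain ⟨hP_leftUnique, hP_rightUnique⟩ := primed_biUnique G x y (β - α - 1)
  simp only [isNx_iff_forall_not_primed, isNy_iff_forall_not_primed, reachM_iff_chainReach]
  refine ⟨fun v hv => ?_, fun v₁ v₂ w hv₁ hv₂ _ h₁ h₂ => ?_, fun w hw => ?_⟩
  · obtain ⟨w, hw, h⟩ :=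
      ChainReach.exists_target hμ_leftTotal hμ_leftUnique hP_rightUnique hv
    exact ⟨w, ⟨hw, h⟩, fun w' ⟨hw', h'⟩ =>
      h'.target_unique hμ_rightUnique hP_leftUnique h hw' hw⟩
  · exact h₁.source_unique hμ_leftUnique hP_rightUnique h₂ hv₁ hv₂
  · exact ChainReach.exists_source hμ_rightTotal hμ_rightUnique hP_leftUnique hw

/-- Given a perfect matching `M` of the transport-bipartite graph of `xy`, the relation
"reachable in `M`" defines a well-defined bijection `φ : N_x → N_y`. -/
theorem stmt6 [Fintype V] [DecidableEq V] (G : SimpleGraph V) [DecidableRel G.Adj]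
    (n d α β : ℕ) (h : IsAmplyRegular G n d α β) (hβα : α < β) (hα : 1 ≤ α)
    (x y : V) (hxy : G.Adj x y)
    (M : (TBGraph G x y (β - α - 1)).Subgraph) (hM : M.IsPerfectMatching) :
    (∀ v, IsNx G x y (β - α - 1) v →
      ∃! w, IsNy G x y (β - α - 1) w ∧ ReachM G x y (β - α - 1) M v w) ∧
    (∀ v₁ v₂ w, IsNx G x y (β - α - 1) v₁ → IsNx G x y (β - α - 1) v₂ →
      IsNy G x y (β - α - 1) w → ReachM G x y (β - α - 1) M v₁ w →
      ReachM G x y (β - α - 1) M v₂ w → v₁ = v₂) ∧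
    (∀ w, IsNy G x y (β - α - 1) w →
      ∃ v, IsNx G x y (β - α - 1) v ∧ ReachM G x y (β - α - 1) M v w) :=
  stmt6_general G α β x y M hM
end

section
/- Let G be an amply regular graph with parameters (n, d, α, β) with β > α ≥ 1. Then for every edge xy of G, the Lin-Lu-Yau curvature satisfies κ(x,y) ≥ 3/d. -/
/-!
The measure `μ_x^{p'}` is a convex combination of `μ_x^p` and the Dirac mass at `x`, and the
transport distance is convex, so `κ_{p'} ≥ κ_p (1 - p') / (1 - p)` for `p ≤ p' < 1`: the function
`p ↦ κ_p / (1 - p)` is nondecreasing and bounded, and its limit `κ(x, y)` dominates each of its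
values.

At `p = 1 / (d + 1)` both measures are uniform on closed neighbourhoods. The mass on `x`, `y` and
the `α` common neighbours stays put, while the `d - 1 - α` other neighbours of `x`, all at distance
2 from `y`, are matched fractionally with the other neighbours of `y`, along edges and along paths
through common neighbours. Counting with the parameters `α`, `β` bounds the cost by
`(d - 1 - α + α (α - 1) / (β - 1)) / (d + 1)`, so `κ(x, y) ≥ (2 + α - α (α - 1) / (β - 1)) / d`,
which is at least `3 / d` when `β > α ≥ 1`.
-/

open Filter Topology
open scoped Classical

variable {V : Type*}

/-- The L¹-Wasserstein (optimal transport) distance between two probability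
measures on the vertex set of a graph, with respect to the graph distance. -/
noncomputable def wassDist (G : SimpleGraph V) (μ ν : V → ℝ) : ℝ :=
  sInf {c : ℝ | ∃ π : V → V → ℝ, (∀ u v, 0 ≤ π u v) ∧
    (∀ u, ∑ᶠ v, π u v = μ u) ∧ (∀ v, ∑ᶠ u, π u v = ν v) ∧
    c = ∑ᶠ u, ∑ᶠ v, (G.dist u v : ℝ) * π u v}

/-- The probability measure `μ_x^p` with idleness `p` around vertex `x`. -/
noncomputable def muIdle (G : SimpleGraph V) [G.LocallyFinite] (p : ℝ) (x : V) : V → ℝ :=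
  fun v => if v = x then p else if G.Adj x v then (1 - p) / (G.degree x : ℝ) else 0

/-- The `p`-Ollivier-Ricci curvature `κ_p(x,y)`. -/
noncomputable def ollivier (G : SimpleGraph V) [G.LocallyFinite] (p : ℝ) (x y : V) : ℝ :=
  1 - wassDist G (muIdle G p x) (muIdle G p y) / (G.dist x y : ℝ)

/-- The Lin-Lu-Yau curvature `κ(x,y) = lim_{p→1} κ_p(x,y)/(1-p)`. -/
noncomputable def lly (G : SimpleGraph V) [G.LocallyFinite] (x y : V) : ℝ :=
  limUnder (𝓝[<] (1 : ℝ)) (fun p => ollivier G p x y / (1 - p))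

section Transport

open Finset

variable [Fintype V] (G : SimpleGraph V)

def IsCoupling (μ ν : V → ℝ) (π : V → V → ℝ) : Prop :=
  (∀ u v, 0 ≤ π u v) ∧ (∀ u, ∑ v, π u v = μ u) ∧ (∀ v, ∑ u, π u v = ν v)

noncomputable def transportCost (π : V → V → ℝ) : ℝ :=
  ∑ u, ∑ v, (G.dist u v : ℝ) * π u v

variable {G} {μ ν μ' ν' : V → ℝ} {π π' : V → V → ℝ}

theorem IsCoupling.add (hπ : IsCoupling μ ν π) (hπ' : IsCoupling μ' ν' π') :
    IsCoupling (μ + μ') (ν + ν') (π + π') :=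
  ⟨fun u v => add_nonneg (hπ.1 u v) (hπ'.1 u v),
    fun u => by simp [sum_add_distrib, hπ.2.1, hπ'.2.1],
    fun v => by simp [sum_add_distrib, hπ.2.2, hπ'.2.2]⟩

theorem IsCoupling.smul (hπ : IsCoupling μ ν π) {c : ℝ} (hc : 0 ≤ c) :
    IsCoupling (c • μ) (c • ν) (c • π) :=
  ⟨fun u v => mul_nonneg hc (hπ.1 u v),
    fun u => by simp [← mul_sum, hπ.2.1],
    fun v => by simp [← mul_sum, hπ.2.2]⟩

theorem IsCoupling.mul (hμ : 0 ≤ μ) (hν : 0 ≤ ν) (hμ1 : ∑ u, μ u = 1)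
    (hν1 : ∑ v, ν v = 1) : IsCoupling μ ν fun u v => μ u * ν v :=
  ⟨fun u v => mul_nonneg (hμ u) (hν v), fun u => by rw [← mul_sum, hν1, mul_one],
    fun v => by rw [← sum_mul, hμ1, one_mul]⟩

theorem transportCost_add :
    transportCost G (π + π') = transportCost G π + transportCost G π' := by
  simp [transportCost, mul_add, sum_add_distrib]

theorem transportCost_smul (c : ℝ) : transportCost G (c • π) = c * transportCost G π := by
  simp [transportCost, mul_sum, mul_left_comm]

theorem transportCost_nonneg (hπ : IsCoupling μ ν π) : 0 ≤ transportCost G π :=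
  sum_nonneg fun u _ => sum_nonneg fun v _ => mul_nonneg (by positivity) (hπ.1 u v)

variable (G) in
theorem wassDist_eq_sInf (μ ν : V → ℝ) :
    wassDist G μ ν = sInf (transportCost G '' {π | IsCoupling μ ν π}) := by
  simp only [wassDist, finsum_eq_sum_of_fintype]
  congr 1
  ext c
  simp [IsCoupling, transportCost, eq_comm (a := c), and_assoc]

variable (G) in
theorem wassDist_le_transportCost (hπ : IsCoupling μ ν π) :
    wassDist G μ ν ≤ transportCost G π := by
  rw [wassDist_eq_sInf]
  exact csInf_le ⟨0, Set.forall_mem_image.2 fun _ hπ => transportCost_nonneg hπ⟩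
    (Set.mem_image_of_mem _ hπ)

variable (G) in
theorem le_wassDist {c : ℝ} (hne : ∃ π, IsCoupling μ ν π)
    (h : ∀ π, IsCoupling μ ν π → c ≤ transportCost G π) : c ≤ wassDist G μ ν := by
  rw [wassDist_eq_sInf]
  obtain ⟨π, hπ⟩ := hne
  exact le_csInf ⟨_, Set.mem_image_of_mem _ hπ⟩ (Set.forall_mem_image.2 h)

variable (G) in
theorem sub_le_wassDist (hne : ∃ π, IsCoupling μ ν π) {f : V → ℝ}
    (hf : ∀ u v, f u - f v ≤ G.dist u v) : ∑ u, f u * μ u - ∑ v, f v * ν v ≤ wassDist G μ ν := by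
  refine le_wassDist G hne fun π hπ => ?_
  calc ∑ u, f u * μ u - ∑ v, f v * ν v = ∑ u, ∑ v, (f u - f v) * π u v := by
        simp_rw [← hπ.2.1, ← hπ.2.2, mul_sum, sub_mul, sum_sub_distrib]
        rw [sum_comm (f := fun v u => f v * π u v)]
    _ ≤ transportCost G π := sum_le_sum fun u _ => sum_le_sum fun v _ =>
        mul_le_mul_of_nonneg_right (hf u v) (hπ.1 u v)

theorem sub_apply_le_wassDist [DecidableEq V] (hG : G.Connected) (hne : ∃ π, IsCoupling μ ν π)
    (y : V) : ν y - μ y ≤ wassDist G μ ν := by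
  have hf : ∀ u v, (if u = y then -1 else 0) - (if v = y then -1 else 0) ≤ (G.dist u v : ℝ) := by
    intro u v
    have h0 : (0 : ℝ) ≤ G.dist u v := Nat.cast_nonneg _
    by_cases hu : u = y <;> by_cases hv : v = y
    · simp [hu, hv]
    · simp only [hu, hv, if_true, if_false]
      linarith
    · have : (1 : ℝ) ≤ G.dist u v := by exact_mod_cast hG.pos_dist_of_ne (hv ▸ hu)
      simpa [hu, hv] using this
    · simp [hu, hv, h0]
  have := sub_le_wassDist G hne hf
  simp only [ite_mul, neg_mul, one_mul, zero_mul, sum_ite_eq', mem_univ,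
    if_true] at this
  linarith

variable (G) in
theorem wassDist_smul_add_le (hne : ∃ π, IsCoupling μ ν π) (hπ' : IsCoupling μ' ν' π') {s : ℝ}
    (hs0 : 0 < s) (hs1 : s ≤ 1) :
    wassDist G (s • μ + (1 - s) • μ') (s • ν + (1 - s) • ν')
      ≤ s * wassDist G μ ν + (1 - s) * transportCost G π' := by
  have key : ∀ π, IsCoupling μ ν π → (wassDist G (s • μ + (1 - s) • μ') (s • ν + (1 - s) • ν')
      - (1 - s) * transportCost G π') / s ≤ transportCost G π := by
    intro π hπ
    have := wassDist_le_transportCost G ((hπ.smul hs0.le).add (hπ'.smul (sub_nonneg.2 hs1)))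
    rw [transportCost_add, transportCost_smul, transportCost_smul] at this
    rw [div_le_iff₀ hs0]
    linarith
  have := le_wassDist G hne key
  rw [div_le_iff₀ hs0] at this
  linarith

theorem isCoupling_indicator [DecidableEq V] {K A B : Finset V} (hA : Disjoint K A)
    (hB : Disjoint K B) {τ : V → V → ℝ} (hτ : ∀ u ∈ A, ∀ v ∈ B, 0 ≤ τ u v)
    (hrow : ∀ u ∈ A, ∑ v ∈ B, τ u v = 1)
    (hcol : ∀ v ∈ B, ∑ u ∈ A, τ u v = 1) :
    IsCoupling (fun u => if u ∈ K ∪ A then 1 else 0) (fun v => if v ∈ K ∪ B then 1 else 0)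
      fun u v => (if u = v then if u ∈ K then 1 else 0 else 0)
        + if u ∈ A ∧ v ∈ B then τ u v else 0 := by
  refine ⟨fun u v => ?_, fun u => ?_, fun v => ?_⟩
  · have : 0 ≤ if u ∈ A ∧ v ∈ B then τ u v else 0 := by
      split_ifs with huv
      exacts [hτ u huv.1 v huv.2, le_rfl]
    positivity
  · by_cases hK : u ∈ K
    · simp [hK, disjoint_left.1 hA hK]
    · by_cases hu : u ∈ A
      · simp [hK, hu, hrow u hu]
      · simp [hK, hu]
  · by_cases hK : v ∈ K
    · simp [hK, disjoint_left.1 hB hK]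
    · by_cases hv : v ∈ B
      · simp [hK, hv, sum_add_distrib, hcol v hv]
      · simp [hK, hv]

theorem transportCost_indicator [DecidableEq V] (K A B : Finset V) (τ : V → V → ℝ) :
    transportCost G (fun u v => (if u = v then if u ∈ K then 1 else 0 else 0)
        + if u ∈ A ∧ v ∈ B then τ u v else 0)
      = ∑ u ∈ A, ∑ v ∈ B, G.dist u v * τ u v := by
  simp [transportCost, mul_add, sum_add_distrib, ite_and, sum_ite_mem]

end Transport

section Idle

open Finset

variable [Fintype V] (G : SimpleGraph V) [DecidableRel G.Adj] {x y : V} {p : ℝ} {d : ℕ}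

theorem muIdle_nonneg (hp0 : 0 ≤ p) (hp1 : p ≤ 1) (x : V) : 0 ≤ muIdle G p x := by
  have : 0 ≤ 1 - p := sub_nonneg.2 hp1
  intro v
  unfold muIdle
  split_ifs <;> positivity

theorem sum_muIdle (hx : G.degree x ≠ 0) (p : ℝ) : ∑ v, muIdle G p x v = 1 := by
  have hsplit : ∀ v, muIdle G p x v
      = p * (if v = x then 1 else 0) + (1 - p) / G.degree x * (if G.Adj x v then 1 else 0) := by
    intro v
    by_cases hv : v = x <;> simp [muIdle, hv]
  simp only [hsplit, sum_add_distrib, ← mul_sum, sum_ite_eq',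
    mem_univ, if_true, sum_boole]
  rw [← SimpleGraph.neighborFinset_eq_filter, G.card_neighborFinset_eq_degree,
    div_mul_cancel₀ _ (Nat.cast_ne_zero.2 hx), mul_one, add_sub_cancel]

theorem muIdle_eq_smul_add (hp : p ≠ 1) (p' : ℝ) :
    muIdle G p' x = ((1 - p') / (1 - p)) • muIdle G p x
      + (1 - (1 - p') / (1 - p)) • Pi.single x 1 := by
  have : 1 - p ≠ 0 := sub_ne_zero.2 (Ne.symm hp)
  ext v
  by_cases hv : v = x
  · subst hv
    simp [muIdle]
    field_simp
    ring
  · simp [muIdle, hv]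
    split_ifs
    · field_simp
    · simp

theorem exists_isCoupling_muIdle (hxy : G.Adj x y) (hp0 : 0 ≤ p) (hp1 : p ≤ 1) :
    ∃ π, IsCoupling (muIdle G p x) (muIdle G p y) π :=
  ⟨_, IsCoupling.mul (muIdle_nonneg G hp0 hp1 x) (muIdle_nonneg G hp0 hp1 y)
    (sum_muIdle G (G.degree_pos_iff_exists_adj x |>.2 ⟨y, hxy⟩).ne' p)
    (sum_muIdle G (G.degree_pos_iff_exists_adj y |>.2 ⟨x, hxy.symm⟩).ne' p)⟩

variable [DecidableEq V] in
theorem muIdle_inv_add_one (hx : G.degree x = d) :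
    muIdle G ((d : ℝ) + 1)⁻¹ x
      = ((d : ℝ) + 1)⁻¹ • fun v => if v ∈ insert x (G.neighborFinset x) then 1 else 0 := by
  ext v
  by_cases hv : v = x
  · simp [muIdle, hv]
  by_cases hxv : G.Adj x v
  · have hd : (d : ℝ) ≠ 0 := by
      rw [← hx]
      exact_mod_cast ((G.degree_pos_iff_exists_adj x).2 ⟨v, hxv⟩).ne'
    simp [muIdle, hv, hxv, hx]
    field_simp
    ring
  · simp [muIdle, hv, hxv]

end Idle

section Curvature

variable [Fintype V] {G : SimpleGraph V} [DecidableRel G.Adj] {x y : V}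

theorem ollivier_of_adj (hxy : G.Adj x y) (p : ℝ) :
    ollivier G p x y = 1 - wassDist G (muIdle G p x) (muIdle G p y) := by
  simp [ollivier, SimpleGraph.dist_eq_one_iff_adj.2 hxy]

theorem wassDist_muIdle_le_of_le (hxy : G.Adj x y) {p p' : ℝ} (hp0 : 0 ≤ p) (hpp' : p ≤ p')
    (hp' : p' < 1) :
    wassDist G (muIdle G p' x) (muIdle G p' y)
      ≤ (1 - p') / (1 - p) * wassDist G (muIdle G p x) (muIdle G p y)
        + (1 - (1 - p') / (1 - p)) := by
  have hp1 : p < 1 := hpp'.trans_lt hp'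
  have hp : 0 < 1 - p := sub_pos.2 hp1
  have hδ := IsCoupling.mul (μ := Pi.single x (1 : ℝ)) (ν := Pi.single y (1 : ℝ))
    (Pi.single_nonneg.2 zero_le_one) (Pi.single_nonneg.2 zero_le_one)
    (Fintype.sum_pi_single' x 1) (Fintype.sum_pi_single' y 1)
  rw [muIdle_eq_smul_add G hp1.ne p', muIdle_eq_smul_add (x := y) G hp1.ne p']
  have := wassDist_smul_add_le G (s := (1 - p') / (1 - p))
    (exists_isCoupling_muIdle G hxy hp0 hp1.le) hδ (div_pos (by linarith) hp)
    ((div_le_one hp).2 (by linarith))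
  simpa [transportCost, Pi.single_apply, SimpleGraph.dist_eq_one_iff_adj.2 hxy] using this

theorem monotoneOn_ollivier_div (hxy : G.Adj x y) :
    MonotoneOn (fun p => ollivier G p x y / (1 - p)) (Set.Ico 0 1) := by
  rintro p ⟨hp0, hp1⟩ p' ⟨-, hp'1⟩ hpp'
  have hW := wassDist_muIdle_le_of_le hxy hp0 hpp' hp'1
  have h1 : 0 < 1 - p := by linarith
  simp only [ollivier_of_adj hxy]
  rw [div_le_div_iff₀ h1 (by linarith)]
  set s := (1 - p') / (1 - p)
  have hs : s * (1 - p) = 1 - p' := div_mul_cancel₀ _ h1.ne'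
  calc (1 - wassDist G (muIdle G p x) (muIdle G p y)) * (1 - p')
      = (1 - p) * (1 - (s * wassDist G (muIdle G p x) (muIdle G p y) + (1 - s))) := by
        rw [← hs]; ring
    _ ≤ (1 - p) * (1 - wassDist G (muIdle G p' x) (muIdle G p' y)) :=
        mul_le_mul_of_nonneg_left (by linarith) h1.le
    _ = _ := mul_comm _ _

theorem ollivier_div_le_two (hG : G.Connected) (hxy : G.Adj x y) {p : ℝ} (hp0 : 0 ≤ p)
    (hp1 : p < 1) : ollivier G p x y / (1 - p) ≤ 2 := by
  have hW := sub_apply_le_wassDist hG (exists_isCoupling_muIdle G hxy hp0 hp1.le) y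
  have hdeg : (1 : ℝ) ≤ G.degree x := by
    exact_mod_cast (G.degree_pos_iff_exists_adj x).2 ⟨y, hxy⟩
  have hμ : muIdle G p x y ≤ 1 - p := by
    simpa [muIdle, hxy, hxy.ne.symm] using div_le_self (by linarith) hdeg
  have hν : muIdle G p y y = p := by simp [muIdle]
  rw [ollivier_of_adj hxy, div_le_iff₀ (by linarith)]
  linarith

theorem ollivier_div_le_lly (hG : G.Connected) (hxy : G.Adj x y) {p : ℝ}
    (hp : p ∈ Set.Ioo 0 1) : ollivier G p x y / (1 - p) ≤ lly G x y := by
  have hmono := (monotoneOn_ollivier_div hxy).mono Set.Ioo_subset_Ico_self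
  have hbdd : BddAbove ((fun p => ollivier G p x y / (1 - p)) '' Set.Ioo 0 1) :=
    ⟨2, Set.forall_mem_image.2 fun q hq => ollivier_div_le_two hG hxy hq.1.le hq.2⟩
  rw [lly, (hmono.tendsto_nhdsWithin_Ioo_left ⟨p, hp⟩ hbdd).limUnder_eq]
  exact le_csSup hbdd (Set.mem_image_of_mem _ hp)

end Curvature

section Neighbours

variable [Fintype V] [DecidableEq V] {G : SimpleGraph V} [DecidableRel G.Adj] {x y w : V}

open Finset

variable (G) in
def SimpleGraph.privateNeighborFinset (x y : V) : Finset V :=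
  G.neighborFinset x \ insert y (G.neighborFinset y)

theorem mem_privateNeighborFinset :
    w ∈ G.privateNeighborFinset x y ↔ G.Adj x w ∧ w ≠ y ∧ ¬ G.Adj y w := by
  simp [SimpleGraph.privateNeighborFinset]

theorem privateNeighborFinset_subset : G.privateNeighborFinset x y ⊆ G.neighborFinset x :=
  sdiff_subset

theorem neighborFinset_eq_insert_union (hxy : G.Adj x y) :
    G.neighborFinset x
      = insert y (G.neighborFinset x ∩ G.neighborFinset y ∪ G.privateNeighborFinset x y) := by
  ext u
  by_cases hu : u = y
  · simp [hu, hxy]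
  · by_cases hyu : G.Adj y u <;> simp [mem_privateNeighborFinset, hu, hyu]

theorem card_neighborFinset_inter_of_adj (hxy : G.Adj x y) (w : V) :
    #(G.neighborFinset w ∩ G.neighborFinset x) = (if G.Adj w y then 1 else 0)
      + #(G.neighborFinset x ∩ G.neighborFinset y ∩ G.neighborFinset w)
      + #(G.privateNeighborFinset x y ∩ G.neighborFinset w) := by
  have hy : y ∉ (G.neighborFinset x ∩ G.neighborFinset y ∪ G.privateNeighborFinset x y)
      ∩ G.neighborFinset w := by
    simp [mem_privateNeighborFinset]
  have hdisj : Disjoint (G.neighborFinset x ∩ G.neighborFinset y ∩ G.neighborFinset w)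
      (G.privateNeighborFinset x y ∩ G.neighborFinset w) := by
    simp +contextual [disjoint_left, mem_privateNeighborFinset]
  rw [inter_comm]
  conv_lhs => rw [neighborFinset_eq_insert_union hxy]
  by_cases hwy : G.Adj w y
  · rw [insert_inter_of_mem (by simpa [G.adj_comm] using hwy), card_insert_of_notMem hy,
      union_inter_distrib_right, card_union_of_disjoint hdisj, if_pos hwy]
    ring
  · rw [insert_inter_of_notMem (by simpa [G.adj_comm] using hwy),
      union_inter_distrib_right, card_union_of_disjoint hdisj, if_neg hwy, zero_add]

theorem insert_neighborFinset_eq_union (hxy : G.Adj x y) :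
    insert x (G.neighborFinset x)
      = insert x (insert y (G.neighborFinset x ∩ G.neighborFinset y))
        ∪ G.privateNeighborFinset x y := by
  conv_lhs => rw [neighborFinset_eq_insert_union hxy]
  rw [insert_union, insert_union]

theorem disjoint_insert_privateNeighborFinset (x y : V) :
    Disjoint (insert x (insert y (G.neighborFinset x ∩ G.neighborFinset y)))
      (G.privateNeighborFinset x y) := by
  simp +contextual [disjoint_left, mem_privateNeighborFinset]

theorem dist_eq_two_of_mem_privateNeighborFinset (hxy : G.Adj x y)
    (hw : w ∈ G.privateNeighborFinset x y) : G.dist w y = 2 := by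
  obtain ⟨hxw, hwy, hyw⟩ := mem_privateNeighborFinset.1 hw
  let walk : G.Walk w y := .cons hxw.symm (.cons hxy .nil)
  have hle : G.dist w y ≤ 2 := G.dist_le walk
  have h0 : G.dist w y ≠ 0 := walk.reachable.dist_eq_zero_iff.not.2 hwy
  have h1 : G.dist w y ≠ 1 := fun h => hyw (SimpleGraph.dist_eq_one_iff_adj.1 h).symm
  omega

theorem sum_sum_inter_neighborFinset (S T : Finset V) (r : V → ℝ) :
    ∑ v ∈ T, ∑ z ∈ S ∩ G.neighborFinset v, r z = ∑ z ∈ S, #(T ∩ G.neighborFinset z) * r z := by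
  rw [sum_comm' (t' := S) (s' := fun z => T ∩ G.neighborFinset z)]
  · simp
  · intro v z
    simp [G.adj_comm]
    tauto

theorem sum_boole_adj (T : Finset V) (w : V) :
    ∑ v ∈ T, (if G.Adj w v then (1 : ℝ) else 0) = #(T ∩ G.neighborFinset w) := by
  simp [sum_boole, filter_mem_eq_inter.symm]

end Neighbours

section AmplyRegular

variable [Fintype V] [DecidableEq V] {G : SimpleGraph V} [DecidableRel G.Adj] {n d a b : ℕ}
  {x y w z : V}

open Finset

theorem IsAmplyRegular.card_privateNeighborFinset (h : IsAmplyRegular G n d a b)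
    (hxy : G.Adj x y) : #(G.privateNeighborFinset x y) + a + 1 = d := by
  have := card_neighborFinset_inter_of_adj hxy x
  rw [inter_self, G.card_neighborFinset_eq_degree, h.2.1 x, if_pos hxy,
    inter_eq_left.2 inter_subset_left, inter_eq_left.2 privateNeighborFinset_subset,
    h.2.2.1 x y hxy] at this
  omega

theorem IsAmplyRegular.card_inter_of_mem_privateNeighborFinset (h : IsAmplyRegular G n d a b)
    (hxy : G.Adj x y) (hw : w ∈ G.privateNeighborFinset x y) :
    #(G.neighborFinset x ∩ G.neighborFinset y ∩ G.neighborFinset w)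
      + #(G.privateNeighborFinset y x ∩ G.neighborFinset w) + 1 = b := by
  have := card_neighborFinset_inter_of_adj hxy.symm w
  rw [h.2.2.2 w y (dist_eq_two_of_mem_privateNeighborFinset hxy hw),
    if_pos (mem_privateNeighborFinset.1 hw).1.symm, inter_comm (G.neighborFinset y)] at this
  omega

theorem IsAmplyRegular.card_inter_of_mem_neighborFinset_inter (h : IsAmplyRegular G n d a b)
    (hxy : G.Adj x y) (hz : z ∈ G.neighborFinset x ∩ G.neighborFinset y) :
    #(G.neighborFinset x ∩ G.neighborFinset y ∩ G.neighborFinset z)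
      + #(G.privateNeighborFinset x y ∩ G.neighborFinset z) + 1 = a := by
  simp only [mem_inter, SimpleGraph.mem_neighborFinset] at hz
  have := card_neighborFinset_inter_of_adj hxy z
  rw [h.2.2.1 z x hz.1.symm, if_pos hz.2.symm] at this
  omega

theorem IsAmplyRegular.card_privateNeighborFinset_inter_comm (h : IsAmplyRegular G n d a b)
    (hxy : G.Adj x y) (hz : z ∈ G.neighborFinset x ∩ G.neighborFinset y) :
    #(G.privateNeighborFinset x y ∩ G.neighborFinset z)
      = #(G.privateNeighborFinset y x ∩ G.neighborFinset z) := by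
  have hxy' := h.card_inter_of_mem_neighborFinset_inter hxy hz
  have hyx' :=
    h.card_inter_of_mem_neighborFinset_inter hxy.symm (inter_comm (G.neighborFinset x) _ ▸ hz)
  rw [inter_comm (G.neighborFinset y)] at hyx'
  omega

end AmplyRegular

section Detour

variable [Fintype V] [DecidableEq V] {G : SimpleGraph V} [DecidableRel G.Adj] {x y : V}

open Finset

variable (G) in
/-- A neighbour `w` of `x` at distance 2 from `y` has `β - 1` neighbours in `N(y) \ {x}`. It sends
one unit to each of them in `G.privateNeighborFinset y x`, and one unit to each common neighbour
`z` of `x` and `y`, which passes it on evenly to its neighbours in `G.privateNeighborFinset y x`.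
In an amply regular graph all row and column sums are then `β - 1`. -/
noncomputable def detourWeight (x y w v : V) : ℝ :=
  (if G.Adj w v then 1 else 0)
    + ∑ z ∈ G.neighborFinset x ∩ G.neighborFinset y ∩ G.neighborFinset w ∩ G.neighborFinset v,
        (#(G.privateNeighborFinset y x ∩ G.neighborFinset z) : ℝ)⁻¹

theorem detourWeight_nonneg (x y w v : V) : 0 ≤ detourWeight G x y w v := by
  unfold detourWeight
  positivity

theorem sum_detourWeight_right (T : Finset V) (w : V) :
    ∑ v ∈ T, detourWeight G x y w v = #(T ∩ G.neighborFinset w)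
      + ∑ z ∈ G.neighborFinset x ∩ G.neighborFinset y ∩ G.neighborFinset w,
          #(T ∩ G.neighborFinset z)
            * (#(G.privateNeighborFinset y x ∩ G.neighborFinset z) : ℝ)⁻¹ := by
  simp only [detourWeight, sum_add_distrib, sum_boole_adj, sum_sum_inter_neighborFinset]

theorem sum_detourWeight_left (T : Finset V) (v : V) :
    ∑ w ∈ T, detourWeight G x y w v = #(T ∩ G.neighborFinset v)
      + ∑ z ∈ G.neighborFinset x ∩ G.neighborFinset y ∩ G.neighborFinset v,
          #(T ∩ G.neighborFinset z)
            * (#(G.privateNeighborFinset y x ∩ G.neighborFinset z) : ℝ)⁻¹ := by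
  simp only [detourWeight, sum_add_distrib, G.adj_comm _ v, sum_boole_adj,
    inter_right_comm _ (G.neighborFinset _) (G.neighborFinset v), sum_sum_inter_neighborFinset]

theorem dist_mul_detourWeight_le (x y w v : V) :
    G.dist w v * detourWeight G x y w v
      ≤ 2 * detourWeight G x y w v - if G.Adj w v then 1 else 0 := by
  have hpaths : G.dist w v * ∑ z ∈ G.neighborFinset x ∩ G.neighborFinset y ∩ G.neighborFinset w
        ∩ G.neighborFinset v, (#(G.privateNeighborFinset y x ∩ G.neighborFinset z) : ℝ)⁻¹
      ≤ 2 * ∑ z ∈ G.neighborFinset x ∩ G.neighborFinset y ∩ G.neighborFinset w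
        ∩ G.neighborFinset v, (#(G.privateNeighborFinset y x ∩ G.neighborFinset z) : ℝ)⁻¹ := by
    rw [mul_sum, mul_sum]
    refine sum_le_sum fun z hz => mul_le_mul_of_nonneg_right ?_ (by positivity)
    simp only [mem_inter, SimpleGraph.mem_neighborFinset] at hz
    exact_mod_cast G.dist_le (.cons hz.1.2 (.cons hz.2.symm .nil))
  have hnonneg : (0 : ℝ) ≤ ∑ z ∈ G.neighborFinset x ∩ G.neighborFinset y ∩ G.neighborFinset w
        ∩ G.neighborFinset v, (#(G.privateNeighborFinset y x ∩ G.neighborFinset z) : ℝ)⁻¹ := by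
    positivity
  unfold detourWeight
  by_cases hwv : G.Adj w v
  · simp only [if_pos hwv, SimpleGraph.dist_eq_one_iff_adj.2 hwv, Nat.cast_one] at hpaths ⊢
    linarith
  · simp only [if_neg hwv]
    linarith

end Detour

section Plan

variable [Fintype V] [DecidableEq V] {G : SimpleGraph V} [DecidableRel G.Adj] {n d a b : ℕ}
  {x y w v : V}

open Finset

theorem IsAmplyRegular.sum_detourWeight_right (h : IsAmplyRegular G n d a b) (hxy : G.Adj x y)
    (hw : w ∈ G.privateNeighborFinset x y) :
    ∑ v ∈ G.privateNeighborFinset y x, detourWeight G x y w v = b - 1 := by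
  rw [_root_.sum_detourWeight_right]
  have hone : ∀ z ∈ G.neighborFinset x ∩ G.neighborFinset y ∩ G.neighborFinset w,
      (#(G.privateNeighborFinset y x ∩ G.neighborFinset z) : ℝ)
        * (#(G.privateNeighborFinset y x ∩ G.neighborFinset z) : ℝ)⁻¹ = 1 := by
    intro z hz
    rw [mem_inter, SimpleGraph.mem_neighborFinset] at hz
    refine mul_inv_cancel₀ (Nat.cast_ne_zero.2 ?_)
    rw [← h.card_privateNeighborFinset_inter_comm hxy hz.1]
    exact card_ne_zero.2 ⟨w, mem_inter.2 ⟨hw, (G.mem_neighborFinset z w).2 hz.2.symm⟩⟩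
  rw [sum_congr rfl hone, sum_const, nsmul_one, eq_sub_iff_add_eq,
    ← h.card_inter_of_mem_privateNeighborFinset hxy hw]
  push_cast
  ring

theorem IsAmplyRegular.sum_detourWeight_left (h : IsAmplyRegular G n d a b) (hxy : G.Adj x y)
    (hv : v ∈ G.privateNeighborFinset y x) :
    ∑ w ∈ G.privateNeighborFinset x y, detourWeight G x y w v = b - 1 := by
  rw [_root_.sum_detourWeight_left]
  have hone : ∀ z ∈ G.neighborFinset x ∩ G.neighborFinset y ∩ G.neighborFinset v,
      (#(G.privateNeighborFinset x y ∩ G.neighborFinset z) : ℝ)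
        * (#(G.privateNeighborFinset y x ∩ G.neighborFinset z) : ℝ)⁻¹ = 1 := by
    intro z hz
    rw [mem_inter, SimpleGraph.mem_neighborFinset] at hz
    rw [h.card_privateNeighborFinset_inter_comm hxy hz.1]
    refine mul_inv_cancel₀ (Nat.cast_ne_zero.2 ?_)
    exact card_ne_zero.2 ⟨v, mem_inter.2 ⟨hv, (G.mem_neighborFinset z v).2 hz.2.symm⟩⟩
  have hb := h.card_inter_of_mem_privateNeighborFinset hxy.symm hv
  rw [inter_comm (G.neighborFinset y)] at hb
  rw [sum_congr rfl hone, sum_const, nsmul_one, eq_sub_iff_add_eq, ← hb]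
  push_cast
  ring

theorem IsAmplyRegular.sum_dist_mul_detourWeight_le (h : IsAmplyRegular G n d a b)
    (hxy : G.Adj x y) (hw : w ∈ G.privateNeighborFinset x y) :
    ∑ v ∈ G.privateNeighborFinset y x, (G.dist w v : ℝ) * detourWeight G x y w v
      ≤ b - 1 + #(G.neighborFinset x ∩ G.neighborFinset y ∩ G.neighborFinset w) := by
  calc ∑ v ∈ G.privateNeighborFinset y x, (G.dist w v : ℝ) * detourWeight G x y w v
      ≤ ∑ v ∈ G.privateNeighborFinset y x,
          (2 * detourWeight G x y w v - if G.Adj w v then 1 else 0) :=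
        sum_le_sum fun v _ => dist_mul_detourWeight_le x y w v
    _ = 2 * (b - 1) - #(G.privateNeighborFinset y x ∩ G.neighborFinset w) := by
        rw [sum_sub_distrib, ← mul_sum, h.sum_detourWeight_right hxy hw, sum_boole_adj]
    _ = b - 1 + #(G.neighborFinset x ∩ G.neighborFinset y ∩ G.neighborFinset w) := by
        rw [← h.card_inter_of_mem_privateNeighborFinset hxy hw]
        push_cast
        ring

theorem IsAmplyRegular.sum_sum_dist_mul_detourWeight_le (h : IsAmplyRegular G n d a b)
    (hxy : G.Adj x y) :
    ∑ w ∈ G.privateNeighborFinset x y, ∑ v ∈ G.privateNeighborFinset y x,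
        (G.dist w v : ℝ) * detourWeight G x y w v
      ≤ (d - 1 - a) * (b - 1) + a * (a - 1) := by
  set C := G.neighborFinset x ∩ G.neighborFinset y
  have hcount : ∑ w ∈ G.privateNeighborFinset x y, (#(C ∩ G.neighborFinset w) : ℝ)
      = ∑ z ∈ C, (#(G.privateNeighborFinset x y ∩ G.neighborFinset z) : ℝ) := by
    simpa using
      sum_sum_inter_neighborFinset (G := G) C (G.privateNeighborFinset x y) fun _ => 1
  have hC : ∀ z ∈ C, (#(G.privateNeighborFinset x y ∩ G.neighborFinset z) : ℝ) ≤ a - 1 := by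
    intro z hz
    rw [← h.card_inter_of_mem_neighborFinset_inter hxy hz]
    push_cast
    linarith [(#(C ∩ G.neighborFinset z)).cast_nonneg (α := ℝ)]
  have hP : (#(G.privateNeighborFinset x y) : ℝ) = d - 1 - a := by
    rw [← h.card_privateNeighborFinset hxy]
    push_cast
    ring
  calc _ ≤ ∑ w ∈ G.privateNeighborFinset x y, (b - 1 + #(C ∩ G.neighborFinset w) : ℝ) :=
        sum_le_sum fun w hw => h.sum_dist_mul_detourWeight_le hxy hw
    _ = #(G.privateNeighborFinset x y) * (b - 1)
          + ∑ z ∈ C, (#(G.privateNeighborFinset x y ∩ G.neighborFinset z) : ℝ) := by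
        rw [sum_add_distrib, sum_const, nsmul_eq_mul, hcount]
    _ ≤ #(G.privateNeighborFinset x y) * (b - 1) + #C * (a - 1) := by
        gcongr
        simpa using sum_le_card_nsmul C _ _ hC
    _ = (d - 1 - a) * (b - 1) + a * (a - 1) := by
        rw [hP, h.2.2.1 x y hxy]

theorem IsAmplyRegular.wassDist_muIdle_inv_add_one_le (h : IsAmplyRegular G n d a b) (hb : 1 < b)
    (hxy : G.Adj x y) :
    wassDist G (muIdle G ((d : ℝ) + 1)⁻¹ x) (muIdle G ((d : ℝ) + 1)⁻¹ y)
      ≤ ((d : ℝ) + 1)⁻¹ * (d - 1 - a + a * (a - 1) / (b - 1)) := by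
  have hb' : (0 : ℝ) < b - 1 := sub_pos.2 (by exact_mod_cast hb)
  have hdisj := disjoint_insert_privateNeighborFinset (G := G) y x
  rw [insert_comm, inter_comm (G.neighborFinset y)] at hdisj
  have hπ := isCoupling_indicator (disjoint_insert_privateNeighborFinset x y) hdisj
    (τ := fun w v => ((b : ℝ) - 1)⁻¹ * detourWeight G x y w v)
    (fun _ _ _ _ => mul_nonneg (inv_nonneg.2 hb'.le) (detourWeight_nonneg ..))
    (fun w hw => by rw [← mul_sum, h.sum_detourWeight_right hxy hw, inv_mul_cancel₀ hb'.ne'])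
    (fun v hv => by rw [← mul_sum, h.sum_detourWeight_left hxy hv, inv_mul_cancel₀ hb'.ne'])
  have hW := wassDist_le_transportCost G (hπ.smul (c := ((d : ℝ) + 1)⁻¹) (by positivity))
  rw [transportCost_smul, transportCost_indicator] at hW
  have hy := insert_neighborFinset_eq_union hxy.symm
  rw [insert_comm, inter_comm (G.neighborFinset y)] at hy
  rw [muIdle_inv_add_one G (h.2.1 x), muIdle_inv_add_one G (h.2.1 y),
    insert_neighborFinset_eq_union hxy, hy]
  refine hW.trans (mul_le_mul_of_nonneg_left ?_ (by positivity))
  calc ∑ w ∈ G.privateNeighborFinset x y, ∑ v ∈ G.privateNeighborFinset y x,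
        (G.dist w v : ℝ) * (((b : ℝ) - 1)⁻¹ * detourWeight G x y w v)
      = ((b : ℝ) - 1)⁻¹ * ∑ w ∈ G.privateNeighborFinset x y,
          ∑ v ∈ G.privateNeighborFinset y x, (G.dist w v : ℝ) * detourWeight G x y w v := by
        simp only [mul_sum, mul_left_comm]
    _ ≤ ((b : ℝ) - 1)⁻¹ * ((d - 1 - a) * (b - 1) + a * (a - 1)) :=
        mul_le_mul_of_nonneg_left (h.sum_sum_dist_mul_detourWeight_le hxy) (inv_nonneg.2 hb'.le)
    _ = d - 1 - a + a * (a - 1) / (b - 1) := by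
        field_simp

theorem IsAmplyRegular.le_lly (h : IsAmplyRegular G n d a b) (hG : G.Connected) (hb : 1 < b)
    (hxy : G.Adj x y) : (2 + a - a * (a - 1) / (b - 1) : ℝ) / d ≤ lly G x y := by
  have hd : (0 : ℝ) < d := by
    rw [← h.2.1 x]
    exact_mod_cast (G.degree_pos_iff_exists_adj x).2 ⟨y, hxy⟩
  have hp : ((d : ℝ) + 1)⁻¹ ∈ Set.Ioo 0 1 := ⟨by positivity, inv_lt_one_of_one_lt₀ (by linarith)⟩
  refine le_trans ?_ (ollivier_div_le_lly hG hxy hp)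
  have hW := h.wassDist_muIdle_inv_add_one_le hb hxy
  have hq : 1 - ((d : ℝ) + 1)⁻¹ = d / (d + 1) := by field_simp; ring
  rw [ollivier_of_adj hxy, hq, div_div_eq_mul_div]
  refine div_le_div_of_nonneg_right ?_ hd.le
  rw [inv_mul_eq_div, le_div_iff₀' (by positivity)] at hW
  linarith

end Plan

/-- Main theorem: for an amply regular graph with `β > α ≥ 1`, the Lin-Lu-Yau
curvature of any edge is at least `3/d`. -/
theorem stmt8 [Fintype V] [DecidableEq V] (G : SimpleGraph V) [DecidableRel G.Adj]
    (hconn : G.Connected) (n d α β : ℕ) (h : IsAmplyRegular G n d α β)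
    (hβα : α < β) (hα : 1 ≤ α) (x y : V) (hxy : G.Adj x y) :
    (3 : ℝ) / d ≤ lly G x y := by
  refine le_trans (div_le_div_of_nonneg_right ?_ d.cast_nonneg) (h.le_lly hconn (by omega) hxy)
  have hαβ : (α : ℝ) + 1 ≤ β := by exact_mod_cast hβα
  have hα' : (1 : ℝ) ≤ α := by exact_mod_cast hα
  have : (α : ℝ) * (α - 1) / (β - 1) ≤ α - 1 := by
    rw [div_le_iff₀ (by linarith)]
    nlinarith
  linarith
end

section
/- Let G be an amply regular graph with parameters (n, d, α, β) such that 2β - α ≥ d + 1. Then for every edge xy ∈ E, the bipartite graph B on parts N_x and N_y with edges {vw : v ∈ N_x, w ∈ N_y, vw ∈ E(G)} has minimum degree at least β - α - 1 ≥ (d - α - 1)/2 = |N_x|/2, and hence B has a perfect matching. -/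
/-!
A vertex `v ∈ N_x` is at distance 2 from `y`, so it has `β` common neighbours with `y`; apart
from `x` and the `α` common neighbours of `v` and `x`, all of them lie in `N_y`. Hence every
vertex of the bipartite graph has degree at least `k = β - α - 1`, and `2β - α ≥ d + 1` makes
`2k ≥ d - α - 1 = |N_x| = |N_y|`. Hall's condition then holds: a set `S` of at most `k` vertices
on one side has the neighbourhood of any single member, and a larger `S` is adjacent to every
vertex of the other side, since a vertex missing `S` would have fewer than `k` neighbours.
-/

variable {V : Type*}

/-- The bipartite graph between `N_x` and `N_y` induced by `G`. -/
def localBip (G : SimpleGraph V) [Fintype V] [DecidableEq V] [DecidableRel G.Adj]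
    (x y : V) : SimpleGraph {v : V // v ∈ Nside G x y ∪ Nside G y x} where
  Adj a b := G.Adj a.1 b.1 ∧
    ((a.1 ∈ Nside G x y ∧ b.1 ∈ Nside G y x) ∨ (a.1 ∈ Nside G y x ∧ b.1 ∈ Nside G x y))
  symm := ⟨by
    rintro a b ⟨hadj, h | h⟩
    · exact ⟨hadj.symm, Or.inr ⟨h.2, h.1⟩⟩
    · exact ⟨hadj.symm, Or.inl ⟨h.2, h.1⟩⟩⟩
  loopless := ⟨fun a h => G.irrefl h.1⟩

noncomputable instance (G : SimpleGraph V) [Fintype V] [DecidableEq V] [DecidableRel G.Adj]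
    (x y : V) (a : {v : V // v ∈ Nside G x y ∪ Nside G y x}) :
    Fintype ((localBip G x y).neighborSet a) := Fintype.ofFinite _

namespace SimpleGraph

variable {W : Type*} {G : SimpleGraph W} [G.LocallyFinite] {s t : Set W} {k : ℕ}

theorem degree_eq_ncard_neighborSet (v : W) : G.degree v = (G.neighborSet v).ncard := by
  rw [Set.ncard_eq_toFinset_card', ← card_neighborSet_eq_degree, Set.toFinset_card]

variable [Finite W]

theorem IsBipartiteWith.ncard_le_ncard_iUnion_neighborSet (hG : G.IsBipartiteWith s t)
    (hst : s.ncard ≤ t.ncard) (hk : s.ncard ≤ 2 * k) (hdeg : ∀ v, k ≤ G.degree v)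
    {S : Set W} (hS : S ⊆ s) : S.ncard ≤ (⋃ v ∈ S, G.neighborSet v).ncard := by
  rcases S.eq_empty_or_nonempty with rfl | ⟨a, ha⟩
  · simp
  by_cases hSk : S.ncard ≤ k
  · calc S.ncard ≤ G.degree a := hSk.trans (hdeg a)
      _ ≤ _ := by
        rw [degree_eq_ncard_neighborSet]
        exact Set.ncard_le_ncard (Set.subset_biUnion_of_mem ha)
  have ht : t ⊆ ⋃ v ∈ S, G.neighborSet v := by
    intro b hb
    by_contra hbS
    have hsub : G.neighborSet b ⊆ s \ S := fun a hab =>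
      ⟨isBipartiteWith_neighborSet_subset' hG hb hab,
        fun haS => hbS (Set.mem_biUnion haS (G.adj_symm hab))⟩
    have := (hdeg b).trans ((degree_eq_ncard_neighborSet b).trans_le (Set.ncard_le_ncard hsub))
    rw [Set.ncard_sdiff hS] at this
    have := Set.ncard_le_ncard hS
    omega
  calc S.ncard ≤ s.ncard := Set.ncard_le_ncard hS
    _ ≤ t.ncard := hst
    _ ≤ _ := Set.ncard_le_ncard ht

theorem IsBipartiteWith.exists_isPerfectMatching_of_le_degree (hG : G.IsBipartiteWith s t)
    (hcover : s ∪ t = Set.univ) (hst : s.ncard = t.ncard) (hk : s.ncard ≤ 2 * k)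
    (hdeg : ∀ v, k ≤ G.degree v) : ∃ M : G.Subgraph, M.IsPerfectMatching := by
  refine exists_isPerfectMatching_of_forall_ncard_le hG fun S => ?_
  have hsplit : S = S ∩ s ∪ S ∩ t := by
    rw [← Set.inter_union_distrib_left, hcover, Set.inter_univ]
  have hs := hG.ncard_le_ncard_iUnion_neighborSet hst.le hk hdeg
    Set.inter_subset_right (S := S ∩ s)
  have ht := hG.symm.ncard_le_ncard_iUnion_neighborSet hst.ge (hst ▸ hk) hdeg
    Set.inter_subset_right (S := S ∩ t)
  have hdisj : Disjoint (⋃ v ∈ S ∩ s, G.neighborSet v) (⋃ v ∈ S ∩ t, G.neighborSet v) :=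
    hG.disjoint.symm.mono
      (Set.iUnion₂_subset fun v hv => isBipartiteWith_neighborSet_subset hG hv.2)
      (Set.iUnion₂_subset fun v hv => isBipartiteWith_neighborSet_subset' hG hv.2)
  calc S.ncard ≤ (S ∩ s).ncard + (S ∩ t).ncard :=
        (Set.ncard_le_ncard hsplit.le).trans (Set.ncard_union_le _ _)
    _ ≤ (⋃ v ∈ S ∩ s, G.neighborSet v).ncard + (⋃ v ∈ S ∩ t, G.neighborSet v).ncard :=
      add_le_add hs ht
    _ = ((⋃ v ∈ S ∩ s, G.neighborSet v) ∪ ⋃ v ∈ S ∩ t, G.neighborSet v).ncard :=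
      (Set.ncard_union_eq hdisj).symm
    _ ≤ (⋃ v ∈ S, G.neighborSet v).ncard := by
      rw [← Set.biUnion_union, ← Set.inter_union_distrib_left, hcover, Set.inter_univ]

end SimpleGraph

open SimpleGraph

section AmplyRegular

variable [Fintype V] [DecidableEq V] {G : SimpleGraph V} [DecidableRel G.Adj] {x y : V}

theorem disjoint_Nside : Disjoint (Nside G x y) (Nside G y x) :=
  Finset.disjoint_left.mpr fun _ hx hy =>
    (Finset.mem_sdiff.mp hy).2 (Finset.mem_insert_of_mem (Finset.mem_sdiff.mp hx).1)

theorem card_Nside {n d α β : ℕ} (h : IsAmplyRegular G n d α β) (hxy : G.Adj x y) :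
    (Nside G x y).card = d - α - 1 := by
  have hsplit : G.neighborFinset x ∩ insert y (G.neighborFinset y) =
      insert y (G.neighborFinset x ∩ G.neighborFinset y) :=
    Finset.inter_insert_of_mem ((G.mem_neighborFinset x y).mpr hxy)
  have hy : y ∉ G.neighborFinset x ∩ G.neighborFinset y := by simp
  rw [Nside, ← Finset.sdiff_inter_self_left, Finset.card_sdiff_of_subset Finset.inter_subset_left,
    hsplit, Finset.card_insert_of_notMem hy, h.2.2.1 x y hxy, card_neighborFinset_eq_degree,
    h.2.1 x]
  omega

theorem dist_eq_two_of_mem_Nside (hxy : G.Adj x y) {v : V} (hv : v ∈ Nside G x y) :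
    G.dist v y = 2 := by
  simp only [Nside, Finset.mem_sdiff, Finset.mem_insert, mem_neighborFinset, not_or] at hv
  obtain ⟨hxv, hvy, hnadj⟩ := hv
  let p : G.Walk v y := .cons hxv.symm (.cons hxy .nil)
  have hle : G.dist v y ≤ 2 := dist_le p
  have h0 : G.dist v y ≠ 0 := dist_ne_zero_iff_ne_and_reachable.mpr ⟨hvy, p.reachable⟩
  have h1 : G.dist v y ≠ 1 := fun h => hnadj (dist_eq_one_iff_adj.mp h).symm
  omega

theorem neighborFinset_inter_subset_insert_union (v : V) :
    G.neighborFinset v ∩ G.neighborFinset y ⊆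
      insert x (G.neighborFinset v ∩ G.neighborFinset x ∪
        Nside G y x ∩ G.neighborFinset v) := by
  intro w hw
  simp only [Finset.mem_inter, mem_neighborFinset] at hw
  simp only [Nside, Finset.mem_insert, Finset.mem_union, Finset.mem_inter, Finset.mem_sdiff,
    mem_neighborFinset]
  grind [G.adj_symm]

theorem le_card_Nside_inter_neighborFinset {n d α β : ℕ} (h : IsAmplyRegular G n d α β)
    (hxy : G.Adj x y) {v : V} (hv : v ∈ Nside G x y) :
    β - α - 1 ≤ (Nside G y x ∩ G.neighborFinset v).card := by
  have hvx : G.Adj v x := ((G.mem_neighborFinset x v).mp (Finset.mem_sdiff.mp hv).1).symm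
  have hβ : β ≤ α + (Nside G y x ∩ G.neighborFinset v).card + 1 :=
    calc β = (G.neighborFinset v ∩ G.neighborFinset y).card :=
          (h.2.2.2 v y (dist_eq_two_of_mem_Nside hxy hv)).symm
      _ ≤ (insert x (G.neighborFinset v ∩ G.neighborFinset x ∪
            Nside G y x ∩ G.neighborFinset v)).card :=
          Finset.card_le_card (neighborFinset_inter_subset_insert_union v)
      _ ≤ (G.neighborFinset v ∩ G.neighborFinset x ∪
            Nside G y x ∩ G.neighborFinset v).card + 1 :=
          Finset.card_insert_le _ _
      _ ≤ α + (Nside G y x ∩ G.neighborFinset v).card + 1 := by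
          grw [Finset.card_union_le, h.2.2.1 v x hvx]
  omega

end AmplyRegular

theorem ncard_preimage_val_of_subset {A B : Finset V} (h : A ⊆ B) :
    (Subtype.val ⁻¹' (A : Set V) : Set {v // v ∈ B}).ncard = A.card := by
  rw [Set.ncard_preimage_of_injective_subset_range Subtype.val_injective
    (by simpa using h), Set.ncard_coe_finset]

section LocalBip

variable [Fintype V] [DecidableEq V] {G : SimpleGraph V} [DecidableRel G.Adj] {x y : V}

theorem isBipartiteWith_localBip :
    (localBip G x y).IsBipartiteWith (Subtype.val ⁻¹' ↑(Nside G x y))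
      (Subtype.val ⁻¹' ↑(Nside G y x)) where
  disjoint := (Finset.disjoint_coe.mpr disjoint_Nside).preimage _
  mem_of_adj _ _ h := h.2

theorem preimage_val_Nside_union :
    (Subtype.val ⁻¹' ↑(Nside G x y) ∪ Subtype.val ⁻¹' ↑(Nside G y x) :
      Set {v // v ∈ Nside G x y ∪ Nside G y x}) = Set.univ :=
  Set.eq_univ_of_forall fun a => Finset.mem_union.mp a.2

theorem neighborSet_localBip_of_mem_left {a : {v // v ∈ Nside G x y ∪ Nside G y x}}
    (ha : a.1 ∈ Nside G x y) :
    (localBip G x y).neighborSet a =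
      Subtype.val ⁻¹' ↑(Nside G y x ∩ G.neighborFinset a) := by
  ext b
  have := Finset.disjoint_left.mp disjoint_Nside ha
  simp [localBip, ha, this, and_comm]

theorem neighborSet_localBip_of_mem_right {a : {v // v ∈ Nside G x y ∪ Nside G y x}}
    (ha : a.1 ∈ Nside G y x) :
    (localBip G x y).neighborSet a =
      Subtype.val ⁻¹' ↑(Nside G x y ∩ G.neighborFinset a) := by
  ext b
  have := Finset.disjoint_right.mp disjoint_Nside ha
  simp [localBip, ha, this, and_comm]

theorem le_degree_localBip {n d α β : ℕ} (h : IsAmplyRegular G n d α β) (hxy : G.Adj x y)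
    (a : {v // v ∈ Nside G x y ∪ Nside G y x}) : β - α - 1 ≤ (localBip G x y).degree a := by
  rw [degree_eq_ncard_neighborSet]
  rcases Finset.mem_union.mp a.2 with ha | ha
  · rw [neighborSet_localBip_of_mem_left ha, ncard_preimage_val_of_subset
      (Finset.inter_subset_left.trans Finset.subset_union_right)]
    exact le_card_Nside_inter_neighborFinset h hxy ha
  · rw [neighborSet_localBip_of_mem_right ha, ncard_preimage_val_of_subset
      (Finset.inter_subset_left.trans Finset.subset_union_left)]
    exact le_card_Nside_inter_neighborFinset h hxy.symm ha

end LocalBip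

/-- If `2β - α ≥ d + 1`, then the bipartite graph between `N_x` and `N_y` has minimum
degree at least `β - α - 1 ≥ (d - α - 1)/2 = |N_x|/2`, and hence a perfect matching. -/
theorem stmt10 [Fintype V] [DecidableEq V] (G : SimpleGraph V) [DecidableRel G.Adj]
    (n d α β : ℕ) (h : IsAmplyRegular G n d α β) (hcond : d + 1 ≤ 2 * β - α)
    (x y : V) (hxy : G.Adj x y) :
    (∀ a, β - α - 1 ≤ (localBip G x y).degree a) ∧
    d - α - 1 ≤ 2 * (β - α - 1) ∧
    ∃ M : (localBip G x y).Subgraph, M.IsPerfectMatching := by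
  have hhalf : d - α - 1 ≤ 2 * (β - α - 1) := by omega
  refine ⟨le_degree_localBip h hxy, hhalf, ?_⟩
  have hx : (Subtype.val ⁻¹' ↑(Nside G x y) :
      Set {v // v ∈ Nside G x y ∪ Nside G y x}).ncard = d - α - 1 := by
    rw [ncard_preimage_val_of_subset Finset.subset_union_left, card_Nside h hxy]
  have hy : (Subtype.val ⁻¹' ↑(Nside G y x) :
      Set {v // v ∈ Nside G x y ∪ Nside G y x}).ncard = d - α - 1 := by
    rw [ncard_preimage_val_of_subset Finset.subset_union_right, card_Nside h hxy.symm]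
  exact isBipartiteWith_localBip.exists_isPerfectMatching_of_le_degree preimage_val_Nside_union
    (hx.trans hy.symm) (hx ▸ hhalf) (le_degree_localBip h hxy)
end

section
/- Let G be an amply regular graph with parameters (n, d, α, β) such that 2β - α ≥ d + 1. Then for every edge xy ∈ E, the Lin-Lu-Yau curvature satisfies κ(x,y) = (2 + α)/d. -/
open Filter Topology
open scoped Classical

variable {V : Type*}

lemma aux_cardA [Fintype V] [DecidableEq V] {G : SimpleGraph V} [DecidableRel G.Adj]
    {d a : ℕ} (hreg : G.IsRegularOfDegree d) {x y : V} (hxy : G.Adj x y)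
    (hαxy : (G.neighborFinset x ∩ G.neighborFinset y).card = a) :
    (G.neighborFinset x \ insert y (G.neighborFinset y)).card + (a + 1) = d := by
  classical
  set T : Finset V := insert y (G.neighborFinset x ∩ G.neighborFinset y) with hT
  have hTsub : T ⊆ G.neighborFinset x := by
    intro v hv
    rcases Finset.mem_insert.mp hv with rfl | hv
    · exact (SimpleGraph.mem_neighborFinset _ _ _).mpr hxy
    · exact (Finset.mem_inter.mp hv).1
  have hTcard : T.card = a + 1 := by
    rw [hT, Finset.card_insert_of_notMem, hαxy]
    intro hy
    exact G.irrefl ((SimpleGraph.mem_neighborFinset _ _ _).mp (Finset.mem_inter.mp hy).2)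
  have hEq : G.neighborFinset x \ insert y (G.neighborFinset y) = G.neighborFinset x \ T := by
    ext u
    simp only [Finset.mem_sdiff, Finset.mem_insert, Finset.mem_inter,
      SimpleGraph.mem_neighborFinset, hT]
    tauto
  have hdx : (G.neighborFinset x).card = d := by
    rw [SimpleGraph.card_neighborFinset_eq_degree, hreg x]
  rw [hEq, Finset.card_sdiff_of_subset hTsub, hTcard, hdx]
  have := Finset.card_le_card hTsub
  rw [hTcard, hdx] at this
  omega

lemma aux_deg [Fintype V] [DecidableEq V] {G : SimpleGraph V} [DecidableRel G.Adj]
    (hconn : G.Connected) {a b : ℕ}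
    (hβ : ∀ u v : V, G.dist u v = 2 → (G.neighborFinset u ∩ G.neighborFinset v).card = b)
    {x y : V} (hxy : G.Adj x y)
    (hαxy : (G.neighborFinset x ∩ G.neighborFinset y).card = a)
    {w : V} (hw : w ∈ G.neighborFinset x \ insert y (G.neighborFinset y)) :
    b ≤ ((G.neighborFinset y \ insert x (G.neighborFinset x)).filter (G.Adj w)).card + (a + 1) := by
  classical
  rw [Finset.mem_sdiff, Finset.mem_insert, SimpleGraph.mem_neighborFinset] at hw
  obtain ⟨haxw, hw2⟩ := hw
  push_neg at hw2
  obtain ⟨hwny, hwnadj⟩ := hw2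
  rw [SimpleGraph.mem_neighborFinset] at hwnadj
  have hdist : G.dist w y = 2 := by
    have hle : G.dist w y ≤ 2 := by
      have := G.dist_le (SimpleGraph.Walk.cons haxw.symm (SimpleGraph.Walk.cons hxy SimpleGraph.Walk.nil))
      simpa using this
    have h0 : 0 < G.dist w y := hconn.pos_dist_of_ne hwny
    have h1 : G.dist w y ≠ 1 := by
      intro hh
      exact hwnadj (SimpleGraph.dist_eq_one_iff_adj.mp hh).symm
    omega
  have hc : (G.neighborFinset w ∩ G.neighborFinset y).card = b := hβ w y hdist
  have hsub : (G.neighborFinset w ∩ G.neighborFinset y) \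
      insert x (G.neighborFinset x ∩ G.neighborFinset y) ⊆
      (G.neighborFinset y \ insert x (G.neighborFinset x)).filter (G.Adj w) := by
    intro v hv
    simp only [Finset.mem_sdiff, Finset.mem_inter, Finset.mem_insert, Finset.mem_filter,
      SimpleGraph.mem_neighborFinset] at hv ⊢
    tauto
  have h1 := Finset.le_card_sdiff (insert x (G.neighborFinset x ∩ G.neighborFinset y))
    (G.neighborFinset w ∩ G.neighborFinset y)
  have h2 : (insert x (G.neighborFinset x ∩ G.neighborFinset y)).card ≤ a + 1 := by
    refine le_trans (Finset.card_insert_le _ _) ?_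
    rw [hαxy]
  have h3 := Finset.card_le_card hsub
  omega

lemma aux_matching [Fintype V] [DecidableEq V] {G : SimpleGraph V} [DecidableRel G.Adj]
    (hconn : G.Connected) {d a b : ℕ} (hreg : G.IsRegularOfDegree d)
    (hα : ∀ u v : V, G.Adj u v → (G.neighborFinset u ∩ G.neighborFinset v).card = a)
    (hβ : ∀ u v : V, G.dist u v = 2 → (G.neighborFinset u ∩ G.neighborFinset v).card = b)
    (hcond : a + d + 1 ≤ 2 * b) {x y : V} (hxy : G.Adj x y) :
    ∃ σ : V → V,
      (∀ w ∈ G.neighborFinset x \ insert y (G.neighborFinset y), G.Adj w (σ w)) ∧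
      Set.InjOn σ ↑(G.neighborFinset x \ insert y (G.neighborFinset y)) ∧
      (G.neighborFinset x \ insert y (G.neighborFinset y)).image σ =
        G.neighborFinset y \ insert x (G.neighborFinset x) := by
  classical
  set A : Finset V := G.neighborFinset x \ insert y (G.neighborFinset y) with hA
  set B : Finset V := G.neighborFinset y \ insert x (G.neighborFinset x) with hB
  have hcardA : A.card + (a + 1) = d := aux_cardA hreg hxy (hα x y hxy)
  have hcardB : B.card + (a + 1) = d := by
    have : (G.neighborFinset y ∩ G.neighborFinset x).card = a := by
      rw [Finset.inter_comm]; exact hα x y hxy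
    exact aux_cardA hreg hxy.symm this
  have hdegA : ∀ w ∈ A, b ≤ (B.filter (G.Adj w)).card + (a + 1) := by
    intro w hw
    exact aux_deg hconn hβ hxy (hα x y hxy) hw
  have hdegB : ∀ w ∈ B, b ≤ (A.filter (G.Adj w)).card + (a + 1) := by
    intro w hw
    have : (G.neighborFinset y ∩ G.neighborFinset x).card = a := by
      rw [Finset.inter_comm]; exact hα x y hxy
    exact aux_deg hconn hβ hxy.symm this hw
  set t : ↥A → Finset V := fun w => B.filter (G.Adj w.1) with ht
  have hall : ∀ s : Finset ↥A, s.card ≤ (s.biUnion t).card := by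
    intro s
    rcases s.eq_empty_or_nonempty with rfl | ⟨w, hws⟩
    · simp
    by_cases hbig : 2 * s.card ≤ A.card
    · have h1 : t w ⊆ s.biUnion t := Finset.subset_biUnion_of_mem t hws
      have h2 := hdegA w.1 w.2
      have h3 : (t w).card ≤ (s.biUnion t).card := Finset.card_le_card h1
      have h4 : (B.filter (G.Adj w.1)).card = (t w).card := rfl
      omega
    · push_neg at hbig
      have hBsub : B ⊆ s.biUnion t := by
        intro v hv
        have hP := hdegB v hv
        set P : Finset V := A.filter (G.Adj v) with hPdef
        set S : Finset V := s.image (fun w : ↥A => w.1) with hSdef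
        have hScard : S.card = s.card := Finset.card_image_of_injective _ Subtype.val_injective
        have hSsub : S ⊆ A := by
          intro u hu
          obtain ⟨w', _, rfl⟩ := Finset.mem_image.mp hu
          exact w'.2
        have hPsub : P ⊆ A := Finset.filter_subset _ _
        have hunion : (P ∪ S).card ≤ A.card :=
          Finset.card_le_card (Finset.union_subset hPsub hSsub)
        have hsum := Finset.card_union_add_card_inter P S
        have hin : 0 < (P ∩ S).card := by omega
        obtain ⟨u, hu⟩ := Finset.card_pos.mp hin
        rw [Finset.mem_inter] at hu
        obtain ⟨huP, huS⟩ := hu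
        obtain ⟨w', hw's, hw'u⟩ := Finset.mem_image.mp huS
        refine Finset.mem_biUnion.mpr ⟨w', hw's, ?_⟩
        rw [ht, Finset.mem_filter]
        rw [Finset.mem_filter] at huP
        exact ⟨hv, by rw [hw'u]; exact huP.2.symm⟩
      have h5 : B.card ≤ (s.biUnion t).card := Finset.card_le_card hBsub
      have h6 : s.card ≤ A.card := by
        have := Finset.card_le_univ s
        rwa [Fintype.card_coe] at this
      omega
  obtain ⟨f, hfinj, hfmem⟩ := (Finset.all_card_le_biUnion_card_iff_existsInjective' t).mp hall
  refine ⟨fun v => if h : v ∈ A then f ⟨v, h⟩ else v, ?_, ?_, ?_⟩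
  · intro w hw
    simp only [dif_pos hw]
    have := hfmem ⟨w, hw⟩
    rw [ht, Finset.mem_filter] at this
    exact this.2
  · intro u hu v hv huv
    rw [Finset.mem_coe] at hu hv
    simp only [dif_pos hu, dif_pos hv] at huv
    have := hfinj huv
    exact congrArg Subtype.val this
  · apply Finset.eq_of_subset_of_card_le
    · intro v hv
      obtain ⟨u, hu, rfl⟩ := Finset.mem_image.mp hv
      simp only [dif_pos hu]
      have := hfmem ⟨u, hu⟩
      rw [ht, Finset.mem_filter] at this
      exact this.1
    · have : (A.image fun v => if h : v ∈ A then f ⟨v, h⟩ else v).card = A.card := by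
        apply Finset.card_image_of_injOn
        intro u hu v hv huv
        rw [Finset.mem_coe] at hu hv
        simp only [dif_pos hu, dif_pos hv] at huv
        exact congrArg Subtype.val (hfinj huv)
      omega


/-- auxiliary transport plan -/
noncomputable def coupFun [DecidableEq V] (p q : ℝ) (x y : V) (A : Finset V)
    (σ : V → V) (m : V → ℝ) : V → V → ℝ :=
  fun u v => (if u = v then m u else 0) + (if u = x ∧ v = y then p - q else 0) +
    (if u ∈ A ∧ v = σ u then q else 0)

lemma coupFun_row [Fintype V] [DecidableEq V] (p q : ℝ) (x y : V) (A : Finset V)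
    (σ : V → V) (m : V → ℝ) (u : V) :
    ∑ v, coupFun p q x y A σ m u v =
      m u + (if u = x then p - q else 0) + (if u ∈ A then q else 0) := by
  classical
  simp only [coupFun]
  rw [Finset.sum_add_distrib, Finset.sum_add_distrib]
  congr 1
  · congr 1
    · rw [Finset.sum_ite_eq]
      simp
    · by_cases hu : u = x
      · subst hu
        simp only [true_and]
        rw [Finset.sum_ite_eq']
        simp
      · simp [hu]
  · by_cases hu : u ∈ A
    · simp only [hu, true_and]
      rw [Finset.sum_ite_eq']
      simp
    · simp [hu]

lemma coupFun_col [Fintype V] [DecidableEq V] (p q : ℝ) (x y : V) (A B : Finset V)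
    (σ : V → V) (m : V → ℝ) (hinj : Set.InjOn σ ↑A) (him : A.image σ = B) (v : V) :
    ∑ u, coupFun p q x y A σ m u v =
      m v + (if v = y then p - q else 0) + (if v ∈ B then q else 0) := by
  classical
  simp only [coupFun]
  rw [Finset.sum_add_distrib, Finset.sum_add_distrib]
  congr 1
  · congr 1
    · rw [Finset.sum_ite_eq']
      simp
    · by_cases hv : v = y
      · subst hv
        simp only [and_true]
        rw [Finset.sum_ite_eq']
        simp
      · simp [hv]
  · by_cases hvB : v ∈ B
    · rw [if_pos hvB]
      rw [← him] at hvB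
      obtain ⟨w, hwA, hwv⟩ := Finset.mem_image.mp hvB
      rw [Finset.sum_eq_single_of_mem w (Finset.mem_univ w)]
      · rw [if_pos ⟨hwA, hwv.symm⟩]
      · intro u _ huw
        rw [if_neg]
        rintro ⟨huA, hveq⟩
        exact huw (hinj (Finset.mem_coe.mpr huA) (Finset.mem_coe.mpr hwA) (by rw [← hveq, hwv]))
    · rw [if_neg hvB, Finset.sum_eq_zero]
      intro u _
      rw [if_neg]
      rintro ⟨huA, hveq⟩
      exact hvB (by rw [← him, hveq]; exact Finset.mem_image_of_mem σ huA)

lemma coupFun_cost [Fintype V] [DecidableEq V] (G : SimpleGraph V) (p q : ℝ) (x y : V)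
    (A : Finset V) (σ : V → V) (m : V → ℝ) (hxy : G.Adj x y)
    (hσ : ∀ w ∈ A, G.Adj w (σ w)) :
    ∑ u, ∑ v, (G.dist u v : ℝ) * coupFun p q x y A σ m u v =
      (p - q) + A.card * q := by
  classical
  simp only [coupFun, mul_add]
  have hsplit : ∀ u : V, ∑ v, ((G.dist u v : ℝ) * (if u = v then m u else 0) +
      (G.dist u v : ℝ) * (if u = x ∧ v = y then p - q else 0) +
      (G.dist u v : ℝ) * (if u ∈ A ∧ v = σ u then q else 0)) =
      (∑ v, (G.dist u v : ℝ) * (if u = v then m u else 0)) +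
      (∑ v, (G.dist u v : ℝ) * (if u = x ∧ v = y then p - q else 0)) +
      (∑ v, (G.dist u v : ℝ) * (if u ∈ A ∧ v = σ u then q else 0)) := by
    intro u
    rw [Finset.sum_add_distrib, Finset.sum_add_distrib]
  simp only [hsplit]
  rw [Finset.sum_add_distrib, Finset.sum_add_distrib]
  have hS1 : ∑ u : V, ∑ v, (G.dist u v : ℝ) * (if u = v then m u else 0) = 0 := by
    apply Finset.sum_eq_zero
    intro u _
    rw [Finset.sum_eq_single_of_mem u (Finset.mem_univ u)]
    · simp [SimpleGraph.dist_self]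
    · intro v _ hvu
      rw [if_neg (fun h => hvu h.symm), mul_zero]
  have hS2 : ∑ u : V, ∑ v, (G.dist u v : ℝ) * (if u = x ∧ v = y then p - q else 0) = p - q := by
    have hterm : ∀ u v : V, (G.dist u v : ℝ) * (if u = x ∧ v = y then p - q else 0) =
        if u = x ∧ v = y then p - q else 0 := by
      intro u v
      split_ifs with h
      · obtain ⟨rfl, rfl⟩ := h
        rw [SimpleGraph.dist_eq_one_iff_adj.mpr hxy]
        norm_num
      · rw [mul_zero]
    simp only [hterm]
    have hinner : ∀ u : V, (∑ v, if u = x ∧ v = y then p - q else 0) =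
        if u = x then p - q else 0 := by
      intro u
      by_cases hu : u = x
      · simp only [hu, true_and]
        rw [Finset.sum_ite_eq']
        simp
      · simp [hu]
    simp only [hinner]
    rw [Finset.sum_ite_eq']
    simp
  have hS3 : ∑ u : V, ∑ v, (G.dist u v : ℝ) * (if u ∈ A ∧ v = σ u then q else 0) =
      A.card * q := by
    have hterm : ∀ u v : V, (G.dist u v : ℝ) * (if u ∈ A ∧ v = σ u then q else 0) =
        if u ∈ A ∧ v = σ u then q else 0 := by
      intro u v
      split_ifs with h
      · obtain ⟨huA, rfl⟩ := h
        rw [SimpleGraph.dist_eq_one_iff_adj.mpr (hσ u huA)]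
        norm_num
      · rw [mul_zero]
    simp only [hterm]
    have hinner : ∀ u : V, (∑ v, if u ∈ A ∧ v = σ u then q else 0) =
        if u ∈ A then q else 0 := by
      intro u
      by_cases hu : u ∈ A
      · simp only [hu, true_and]
        rw [Finset.sum_ite_eq']
        simp
      · simp [hu]
    simp only [hinner]
    rw [Finset.sum_ite_mem, Finset.univ_inter, Finset.sum_const, nsmul_eq_mul]
  rw [hS1, hS2, hS3, zero_add]


lemma wass_eq [Fintype V] [DecidableEq V] {G : SimpleGraph V} [DecidableRel G.Adj]
    (hconn : G.Connected) {d a b : ℕ} (hreg : G.IsRegularOfDegree d)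
    (hα : ∀ u v : V, G.Adj u v → (G.neighborFinset u ∩ G.neighborFinset v).card = a)
    (hβ : ∀ u v : V, G.dist u v = 2 → (G.neighborFinset u ∩ G.neighborFinset v).card = b)
    (hcond : a + d + 1 ≤ 2 * b) {x y : V} (hxy : G.Adj x y)
    {p : ℝ} (hp1 : 1 / (d + 1 : ℝ) ≤ p) (hp2 : p ≤ 1) :
    wassDist G (muIdle G p x) (muIdle G p y) = 1 - (1 - p) * (2 + a) / d := by
  classical
  have hd1 : 1 ≤ d := by
    have h0 : 0 < G.degree x := by
      rw [SimpleGraph.degree_pos_iff_exists_adj]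
      exact ⟨y, hxy⟩
    rw [hreg x] at h0
    omega
  have hd0 : (0:ℝ) < d := by exact_mod_cast hd1
  set q : ℝ := (1 - p) / d with hqdef
  have hq0 : 0 ≤ q := div_nonneg (by linarith) hd0.le
  have hpq : q ≤ p := by
    rw [hqdef, div_le_iff₀ hd0]
    rw [div_le_iff₀ (by positivity : (0:ℝ) < (d:ℝ) + 1)] at hp1
    linarith
  have hp0 : 0 ≤ p := le_trans hq0 hpq
  set A : Finset V := G.neighborFinset x \ insert y (G.neighborFinset y) with hAdef
  set B : Finset V := G.neighborFinset y \ insert x (G.neighborFinset x) with hBdef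
  obtain ⟨σ, hσadj, hσinj, hσim⟩ := aux_matching hconn hreg hα hβ hcond hxy
  rw [← hAdef] at hσadj hσinj hσim
  rw [← hBdef] at hσim
  have hcardA : A.card + (a + 1) = d := by
    rw [hAdef]
    exact aux_cardA hreg hxy (hα x y hxy)
  clear_value A B
  have hmA : ∀ u, u ∈ A ↔ G.Adj x u ∧ u ≠ y ∧ ¬ G.Adj y u := by
    intro u
    rw [hAdef]
    simp only [Finset.mem_sdiff, Finset.mem_insert, SimpleGraph.mem_neighborFinset, not_or]
  have hmB : ∀ u, u ∈ B ↔ G.Adj y u ∧ u ≠ x ∧ ¬ G.Adj x u := by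
    intro u
    rw [hBdef]
    simp only [Finset.mem_sdiff, Finset.mem_insert, SimpleGraph.mem_neighborFinset, not_or]
  have hxA : x ∉ A := fun h => G.irrefl ((hmA x).mp h).1
  have hyA : y ∉ A := fun h => ((hmA y).mp h).2.1 rfl
  have hxB : x ∉ B := fun h => ((hmB x).mp h).2.1 rfl
  have hyB : y ∉ B := fun h => G.irrefl ((hmB y).mp h).1
  have hmux : ∀ u, muIdle G p x u = if u = x then p else if G.Adj x u then q else 0 := by
    intro u
    simp only [muIdle, hreg x, hqdef]
  have hmuy : ∀ u, muIdle G p y u = if u = y then p else if G.Adj y u then q else 0 := by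
    intro u
    simp only [muIdle, hreg y, hqdef]
  set m : V → ℝ := fun u =>
    muIdle G p x u - (if u = x then p - q else 0) - (if u ∈ A then q else 0) with hmdef
  clear_value m
  have hkey : ∀ u, m u =
      muIdle G p y u - (if u = y then p - q else 0) - (if u ∈ B then q else 0) := by
    intro u
    simp only [hmdef]
    by_cases hux : u = x
    · subst hux
      rw [if_pos rfl, if_neg hxA, if_neg hxy.ne, if_neg hxB, hmux, hmuy,
        if_pos rfl, if_neg hxy.ne, if_pos hxy.symm]
      ring
    · by_cases huy : u = y
      · subst huy
        rw [if_neg hux, if_neg hyA, if_pos rfl, if_neg hyB, hmux, hmuy,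
          if_neg hux, if_pos hxy, if_pos rfl]
        ring
      · have hA' : u ∈ A ↔ G.Adj x u ∧ ¬ G.Adj y u := by
          rw [hmA]; tauto
        have hB' : u ∈ B ↔ G.Adj y u ∧ ¬ G.Adj x u := by
          rw [hmB]; tauto
        rw [hmux, hmuy, if_neg hux, if_neg huy, if_neg hux, if_neg huy]
        by_cases hax : G.Adj x u <;> by_cases hay : G.Adj y u <;>
          simp [hA', hB', hax, hay] <;> ring
  have hm0 : ∀ u, 0 ≤ m u := by
    intro u
    simp only [hmdef]
    by_cases hux : u = x
    · subst hux
      rw [if_pos rfl, if_neg hxA, hmux, if_pos rfl]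
      linarith
    · rw [if_neg hux, hmux, if_neg hux]
      by_cases huA : u ∈ A
      · rw [if_pos huA, if_pos ((hmA u).mp huA).1]
        linarith
      · rw [if_neg huA]
        split_ifs <;> linarith
  set π : V → V → ℝ := coupFun p q x y A σ m with hπdef
  clear_value π
  have hπ0 : ∀ u v, 0 ≤ π u v := by
    intro u v
    rw [hπdef]
    unfold coupFun
    have t1 : (0:ℝ) ≤ if u = v then m u else 0 := by
      by_cases h : u = v
      · rw [if_pos h]; exact hm0 u
      · rw [if_neg h]
    have t2 : (0:ℝ) ≤ if u = x ∧ v = y then p - q else 0 := by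
      by_cases h : u = x ∧ v = y
      · rw [if_pos h]; linarith
      · rw [if_neg h]
    have t3 : (0:ℝ) ≤ if u ∈ A ∧ v = σ u then q else 0 := by
      by_cases h : u ∈ A ∧ v = σ u
      · rw [if_pos h]; exact hq0
      · rw [if_neg h]
    linarith
  have hrow : ∀ u, ∑ᶠ v, π u v = muIdle G p x u := by
    intro u
    rw [finsum_eq_sum_of_fintype, hπdef, coupFun_row]
    simp only [hmdef]
    ring
  have hcol : ∀ v, ∑ᶠ u, π u v = muIdle G p y v := by
    intro v
    rw [finsum_eq_sum_of_fintype, hπdef, coupFun_col p q x y A B σ m hσinj hσim, hkey v]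
    ring
  have hAc : (A.card : ℝ) = (d : ℝ) - a - 1 := by
    have h : (A.card : ℝ) + ((a : ℝ) + 1) = (d : ℝ) := by exact_mod_cast hcardA
    linarith
  have hT : (1:ℝ) - (1 - p) * (2 + a) / d = (p - q) + A.card * q := by
    rw [hAc, hqdef]
    field_simp
    ring
  have hcost : ∑ᶠ u, ∑ᶠ v, (G.dist u v : ℝ) * π u v = (p - q) + A.card * q := by
    simp only [finsum_eq_sum_of_fintype, hπdef]
    exact coupFun_cost G p q x y A σ m hxy hσadj
  have hmem : (1 - (1 - p) * (2 + a) / d) ∈ {c : ℝ | ∃ π' : V → V → ℝ,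
      (∀ u v, 0 ≤ π' u v) ∧ (∀ u, ∑ᶠ v, π' u v = muIdle G p x u) ∧
      (∀ v, ∑ᶠ u, π' u v = muIdle G p y v) ∧
      c = ∑ᶠ u, ∑ᶠ v, (G.dist u v : ℝ) * π' u v} := by
    exact ⟨π, hπ0, hrow, hcol, by rw [hcost]; exact hT⟩
  have hlb : ∀ c ∈ {c : ℝ | ∃ π' : V → V → ℝ,
      (∀ u v, 0 ≤ π' u v) ∧ (∀ u, ∑ᶠ v, π' u v = muIdle G p x u) ∧
      (∀ v, ∑ᶠ u, π' u v = muIdle G p y v) ∧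
      c = ∑ᶠ u, ∑ᶠ v, (G.dist u v : ℝ) * π' u v},
      1 - (1 - p) * (2 + a) / d ≤ c := by
    rintro c ⟨π', h0, hr, hc', rfl⟩
    have hr' : ∀ u, ∑ v, π' u v = muIdle G p x u := by
      intro u
      rw [← hr u, finsum_eq_sum_of_fintype]
    have hc'' : ∀ v, ∑ u, π' u v = muIdle G p y v := by
      intro v
      rw [← hc' v, finsum_eq_sum_of_fintype]
    set F : V → ℝ := fun u => if u ∈ insert x A then 1 else 0 with hF
    have hle1 : ∀ u v, (F u - F v) * π' u v ≤ (G.dist u v : ℝ) * π' u v := by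
      intro u v
      apply mul_le_mul_of_nonneg_right _ (h0 u v)
      by_cases huv : u = v
      · subst huv
        simp [SimpleGraph.dist_self]
      · have hge : (1:ℝ) ≤ (G.dist u v : ℝ) := by
          exact_mod_cast hconn.pos_dist_of_ne huv
        have hFu : F u ≤ 1 := by
          simp only [hF]
          split_ifs <;> norm_num
        have hFv : 0 ≤ F v := by
          simp only [hF]
          split_ifs <;> norm_num
        linarith
    have hFx : ∑ u, F u * muIdle G p x u = p + A.card * q := by
      simp only [hF, ite_mul, one_mul, zero_mul]
      rw [Finset.sum_ite_mem, Finset.univ_inter, Finset.sum_insert hxA]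
      have hx : muIdle G p x x = p := by rw [hmux, if_pos rfl]
      have hAval : ∀ u ∈ A, muIdle G p x u = q := by
        intro u hu
        have hux : u ≠ x := fun h => hxA (h ▸ hu)
        rw [hmux, if_neg hux, if_pos ((hmA u).mp hu).1]
      rw [hx, Finset.sum_congr rfl hAval, Finset.sum_const, nsmul_eq_mul]
    have hFy : ∑ v, F v * muIdle G p y v = q := by
      simp only [hF, ite_mul, one_mul, zero_mul]
      rw [Finset.sum_ite_mem, Finset.univ_inter, Finset.sum_insert hxA]
      have hx : muIdle G p y x = q := by
        rw [hmuy, if_neg hxy.ne, if_pos hxy.symm]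
      have hAval : ∀ u ∈ A, muIdle G p y u = 0 := by
        intro u hu
        obtain ⟨_, huy, hnay⟩ := (hmA u).mp hu
        rw [hmuy, if_neg huy, if_neg hnay]
      rw [hx, Finset.sum_congr rfl hAval, Finset.sum_const, smul_zero, add_zero]
    have hsplit : ∑ u, ∑ v, (F u - F v) * π' u v =
        (∑ u, F u * muIdle G p x u) - ∑ v, F v * muIdle G p y v := by
      have e1 : ∀ u : V, ∑ v, (F u - F v) * π' u v =
          F u * (∑ v, π' u v) - ∑ v, F v * π' u v := by
        intro u
        rw [Finset.mul_sum, ← Finset.sum_sub_distrib]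
        exact Finset.sum_congr rfl fun v _ => by ring
      simp only [e1]
      rw [Finset.sum_sub_distrib]
      congr 1
      · exact Finset.sum_congr rfl fun u _ => by rw [hr' u]
      · rw [Finset.sum_comm]
        exact Finset.sum_congr rfl fun v _ => by rw [← Finset.mul_sum, hc'' v]
    have hmain : ∑ u, ∑ v, (F u - F v) * π' u v ≤
        ∑ u, ∑ v, (G.dist u v : ℝ) * π' u v :=
      Finset.sum_le_sum fun u _ => Finset.sum_le_sum fun v _ => hle1 u v
    have hfin : ∑ᶠ u, ∑ᶠ v, (G.dist u v : ℝ) * π' u v =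
        ∑ u, ∑ v, (G.dist u v : ℝ) * π' u v := by
      simp only [finsum_eq_sum_of_fintype]
    rw [hfin]
    calc 1 - (1 - p) * (2 + a) / d = (p + A.card * q) - q := by rw [hT]; ring
      _ = (∑ u, F u * muIdle G p x u) - ∑ v, F v * muIdle G p y v := by rw [hFx, hFy]
      _ = ∑ u, ∑ v, (F u - F v) * π' u v := hsplit.symm
      _ ≤ _ := hmain
  rw [wassDist]
  exact le_antisymm (csInf_le ⟨_, hlb⟩ hmem) (le_csInf ⟨_, hmem⟩ hlb)

/-- If `2β - α ≥ d + 1`, then every edge of an amply regular graph with parameters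
`(n, d, α, β)` has Lin-Lu-Yau curvature exactly `(2 + α)/d`. -/
theorem stmt11 [Fintype V] [DecidableEq V] (G : SimpleGraph V) [DecidableRel G.Adj]
    (hconn : G.Connected) (n d α β : ℕ) (h : IsAmplyRegular G n d α β)
    (hcond : d + 1 ≤ 2 * β - α) (x y : V) (hxy : G.Adj x y) :
    lly G x y = (2 + (α : ℝ)) / d := by
  obtain ⟨hn, hreg, hα, hβ⟩ := h
  have hd1 : 1 ≤ d := by
    have h0 : 0 < G.degree x := by
      rw [SimpleGraph.degree_pos_iff_exists_adj]
      exact ⟨y, hxy⟩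
    rw [hreg x] at h0
    omega
  have hcond' : α + d + 1 ≤ 2 * β := by omega
  have hdle : 1 / ((d : ℝ) + 1) < 1 := by
    rw [div_lt_one (by positivity)]
    have : (1:ℝ) ≤ (d : ℝ) := by exact_mod_cast hd1
    linarith
  have hev : ∀ᶠ p in 𝓝[<] (1:ℝ), ollivier G p x y / (1 - p) = (2 + (α : ℝ)) / d := by
    filter_upwards [Ioo_mem_nhdsLT_of_mem
      (show (1:ℝ) ∈ Set.Ioc (1 / ((d : ℝ) + 1)) 1 from ⟨hdle, le_refl 1⟩)] with p hp
    have hW := wass_eq hconn hreg hα hβ hcond' hxy (le_of_lt hp.1) (le_of_lt hp.2)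
    have hdist1 : G.dist x y = 1 := SimpleGraph.dist_eq_one_iff_adj.mpr hxy
    have hd0 : (d : ℝ) ≠ 0 := Nat.cast_ne_zero.mpr (by omega)
    have h1p : (1:ℝ) - p ≠ 0 := ne_of_gt (by linarith [hp.2])
    unfold ollivier
    rw [hdist1, hW]
    push_cast
    field_simp
    ring
  have htend : Filter.Tendsto (fun p => ollivier G p x y / (1 - p)) (𝓝[<] (1:ℝ))
      (𝓝 ((2 + (α : ℝ)) / d)) :=
    Filter.Tendsto.congr' (Filter.EventuallyEq.symm hev) tendsto_const_nhds
  unfold lly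
  exact htend.limUnder_eq
end

section
/- Let G be an amply regular graph with parameters (n, d, α, β) with β > α ≥ 1. Then diam(G) ≤ ⌊2d/3⌋. -/
variable {V : Type*}

open Finset

section Helpers

variable [Fintype V] [DecidableEq V] (G : SimpleGraph V) [DecidableRel G.Adj]

lemma mem_Nside {x y v : V} :
    v ∈ Nside G x y ↔ G.Adj x v ∧ v ≠ y ∧ ¬ G.Adj y v := by
  simp only [Nside, mem_sdiff, SimpleGraph.mem_neighborFinset, mem_insert, not_or]

lemma mem_Delta {x y v : V} :
    v ∈ Delta G x y ↔ G.Adj x v ∧ G.Adj y v := by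
  simp [Delta, SimpleGraph.mem_neighborFinset]

lemma nbhd_decomp {x y : V} (hxy : G.Adj x y) :
    G.neighborFinset x = insert y (Delta G x y ∪ Nside G x y) := by
  ext v
  simp only [mem_insert, mem_union, mem_Delta, mem_Nside, SimpleGraph.mem_neighborFinset]
  constructor
  · intro hv
    by_cases h1 : v = y
    · exact Or.inl h1
    · by_cases h2 : G.Adj y v
      · exact Or.inr (Or.inl ⟨hv, h2⟩)
      · exact Or.inr (Or.inr ⟨hv, h1, h2⟩)
  · rintro (rfl | h | h)
    · exact hxy
    · exact h.1
    · exact h.1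

lemma notMem_DN {x y : V} : y ∉ Delta G x y ∪ Nside G x y := by
  simp only [mem_union, mem_Delta, mem_Nside, not_or]
  exact ⟨fun h => G.irrefl h.2, fun h => h.2.1 rfl⟩

lemma disj_DN (x y : V) : Disjoint (Delta G x y) (Nside G x y) := by
  rw [Finset.disjoint_left]
  intro v hv hv'
  exact ((mem_Nside G).mp hv').2.2 ((mem_Delta G).mp hv).2

lemma card_Nside_s13 {x y : V} (hxy : G.Adj x y) {d a : ℕ}
    (hd : (G.neighborFinset x).card = d) (ha : (Delta G x y).card = a) :
    (Nside G x y).card + a + 1 = d := by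
  rw [← hd, nbhd_decomp G hxy, Finset.card_insert_of_notMem (notMem_DN G),
    Finset.card_union_of_disjoint (disj_DN G x y), ha]
  omega

lemma sum_card_nbr_inter_comm (s t : Finset V) :
    ∑ a ∈ s, (G.neighborFinset a ∩ t).card = ∑ b ∈ t, (G.neighborFinset b ∩ s).card := by
  have key : ∀ (s t : Finset V) (a : V),
      (G.neighborFinset a ∩ t).card = ∑ b ∈ t, (if G.Adj a b then 1 else 0) := by
    intro s t a
    rw [← Finset.card_filter]
    congr 1
    ext b
    simp [SimpleGraph.mem_neighborFinset, and_comm]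
  simp only [key s t, key t s]
  rw [Finset.sum_comm]
  apply Finset.sum_congr rfl
  intro b _
  apply Finset.sum_congr rfl
  intro a _
  by_cases h : G.Adj a b
  · rw [if_pos h, if_pos h.symm]
  · rw [if_neg h, if_neg (fun hc => h hc.symm)]

lemma edge_step (hconn : G.Connected) (d a b : ℕ)
    (hreg : G.IsRegularOfDegree d)
    (hcadj : ∀ x y : V, G.Adj x y → (G.neighborFinset x ∩ G.neighborFinset y).card = a)
    (hc2 : ∀ x y : V, G.dist x y = 2 → (G.neighborFinset x ∩ G.neighborFinset y).card = b)
    (hba : a < b) (ha : 1 ≤ a)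
    {x y : V} (hxy : G.Adj x y) (F : V → ℤ)
    (hlip : ∀ u v : V, G.Adj u v → F u ≤ F v + 1)
    (hstep : F y = F x + 1) :
    ∑ z ∈ G.neighborFinset y, F z + 3 ≤ ∑ z ∈ G.neighborFinset x, F z + d := by
  obtain ⟨a1, rfl⟩ : ∃ a1, a = a1 + 1 := ⟨a - 1, by omega⟩
  obtain ⟨b1, rfl⟩ : ∃ b1, b = b1 + 1 := ⟨b - 1, by omega⟩
  have ha1b : a1 + 1 ≤ b1 := by omega
  set k := F x with hk
  -- the six level sets
  set Ny := Nside G y x with hNydef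
  set Nx := Nside G x y with hNxdef
  set D := Delta G x y with hDdef
  set W0 := Ny.filter (fun w => F w = k) with hW0def
  set W1 := Ny.filter (fun w => F w = k + 1) with hW1def
  set W2 := Ny.filter (fun w => F w = k + 2) with hW2def
  set Um := Nx.filter (fun u => F u = k - 1) with hUmdef
  set U0 := Nx.filter (fun u => F u = k) with hU0def
  set U1 := Nx.filter (fun u => F u = k + 1) with hU1def
  set D0 := D.filter (fun z => F z = k) with hD0def
  set D1 := D.filter (fun z => F z = k + 1) with hD1def
  have hNyMem : ∀ w, w ∈ Ny ↔ G.Adj y w ∧ w ≠ x ∧ ¬ G.Adj x w := fun w => mem_Nside G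
  have hNxMem : ∀ u, u ∈ Nx ↔ G.Adj x u ∧ u ≠ y ∧ ¬ G.Adj y u := fun u => mem_Nside G
  have hDMem : ∀ z, z ∈ D ↔ G.Adj x z ∧ G.Adj y z := fun z => mem_Delta G
  -- ranges of F
  have hNyRange : ∀ w ∈ Ny, k ≤ F w ∧ F w ≤ k + 2 := by
    intro w hw
    have h1 := ((hNyMem w).mp hw).1
    have h2 := hlip w y h1.symm
    have h3 := hlip y w h1
    omega
  have hNxRange : ∀ u ∈ Nx, k - 1 ≤ F u ∧ F u ≤ k + 1 := by
    intro u hu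
    have h1 := ((hNxMem u).mp hu).1
    have h2 := hlip u x h1.symm
    have h3 := hlip x u h1
    omega
  have hDRange : ∀ z ∈ D, k ≤ F z ∧ F z ≤ k + 1 := by
    intro z hz
    have h1 := (hDMem z).mp hz
    have h2 := hlip z x h1.1.symm
    have h3 := hlip y z h1.2
    omega
  -- distance-two helper
  have dist_two : ∀ (r s t : V), G.Adj r s → G.Adj s t → ¬ G.Adj r t → r ≠ t →
      G.dist r t = 2 := by
    intro r s t h1 h2 h3 h4
    have hle : G.dist r t ≤ 2 := by
      have := SimpleGraph.dist_le (SimpleGraph.Walk.cons h1 (SimpleGraph.Walk.cons h2 SimpleGraph.Walk.nil))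
      simpa using this
    have h0 : G.dist r t ≠ 0 := fun hc => h4 (hconn.dist_eq_zero_iff.mp hc)
    have h1' : G.dist r t ≠ 1 := fun hc => h3 (SimpleGraph.dist_eq_one_iff_adj.mp hc)
    omega
  have hdeg : ∀ v : V, (G.neighborFinset v).card = d := fun v => hreg v
  -- exact counts out of W2
  have hcount_w : ∀ w ∈ W2, (G.neighborFinset w ∩ (U1 ∪ D1)).card = b1 := by
    intro w hw
    obtain ⟨hwNy, hwF⟩ := mem_filter.mp hw
    obtain ⟨hyw, hwx, hnxw⟩ := (hNyMem w).mp hwNy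
    have hwxd : G.dist w x = 2 :=
      dist_two w y x hyw.symm hxy.symm (fun hc => hnxw hc.symm) hwx
    have hb := hc2 w x hwxd
    have hynot : y ∉ G.neighborFinset w ∩ (U1 ∪ D1) := by
      simp only [mem_inter, mem_union, not_and, not_or]
      intro _
      constructor
      · intro hy1
        exact ((hNxMem y).mp (mem_filter.mp hy1).1).2.1 rfl
      · intro hy1
        exact G.irrefl ((hDMem y).mp (mem_filter.mp hy1).1).2
    have hset : G.neighborFinset w ∩ G.neighborFinset x
        = insert y (G.neighborFinset w ∩ (U1 ∪ D1)) := by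
      ext v
      simp only [mem_inter, mem_insert, SimpleGraph.mem_neighborFinset, mem_union]
      constructor
      · rintro ⟨hwv, hxv⟩
        have hv1 : F v = k + 1 := by
          have e1 := hlip v x hxv.symm
          have e2 := hlip w v hwv
          omega
        by_cases hvy : v = y
        · exact Or.inl hvy
        · right
          refine ⟨hwv, ?_⟩
          by_cases hyv : G.Adj y v
          · exact Or.inr (mem_filter.mpr ⟨(hDMem v).mpr ⟨hxv, hyv⟩, hv1⟩)
          · exact Or.inl (mem_filter.mpr ⟨(hNxMem v).mpr ⟨hxv, hvy, hyv⟩, hv1⟩)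
      · rintro (rfl | ⟨hwv, hv⟩)
        · exact ⟨hyw.symm, hxy⟩
        · refine ⟨hwv, ?_⟩
          rcases hv with hv | hv
          · exact ((hNxMem v).mp (mem_filter.mp hv).1).1
          · exact ((hDMem v).mp (mem_filter.mp hv).1).1
    rw [hset, Finset.card_insert_of_notMem hynot] at hb
    omega
  -- exact counts out of Um
  have hcount_u : ∀ u ∈ Um, (G.neighborFinset u ∩ (W0 ∪ D0)).card = b1 := by
    intro u hu
    obtain ⟨huNx, huF⟩ := mem_filter.mp hu
    obtain ⟨hxu, huy, hnyu⟩ := (hNxMem u).mp huNx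
    have huyd : G.dist u y = 2 :=
      dist_two u x y hxu.symm hxy (fun hc => hnyu hc.symm) huy
    have hb := hc2 u y huyd
    have hxnot : x ∉ G.neighborFinset u ∩ (W0 ∪ D0) := by
      simp only [mem_inter, mem_union, not_and, not_or]
      intro _
      constructor
      · intro hx1
        exact ((hNyMem x).mp (mem_filter.mp hx1).1).2.1 rfl
      · intro hx1
        exact G.irrefl ((hDMem x).mp (mem_filter.mp hx1).1).1
    have hset : G.neighborFinset u ∩ G.neighborFinset y
        = insert x (G.neighborFinset u ∩ (W0 ∪ D0)) := by
      ext v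
      simp only [mem_inter, mem_insert, SimpleGraph.mem_neighborFinset, mem_union]
      constructor
      · rintro ⟨huv, hyv⟩
        have hv0 : F v = k := by
          have e1 := hlip y v hyv
          have e2 := hlip v u huv.symm
          omega
        by_cases hvx : v = x
        · exact Or.inl hvx
        · right
          refine ⟨huv, ?_⟩
          by_cases hxv : G.Adj x v
          · exact Or.inr (mem_filter.mpr ⟨(hDMem v).mpr ⟨hxv, hyv⟩, hv0⟩)
          · exact Or.inl (mem_filter.mpr ⟨(hNyMem v).mpr ⟨hyv, hvx, hxv⟩, hv0⟩)
      · rintro (rfl | ⟨huv, hv⟩)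
        · exact ⟨hxu.symm, hxy.symm⟩
        · refine ⟨huv, ?_⟩
          rcases hv with hv | hv
          · exact ((hNyMem v).mp (mem_filter.mp hv).1).1
          · exact ((hDMem v).mp (mem_filter.mp hv).1).2
    rw [hset, Finset.card_insert_of_notMem hxnot] at hb
    omega
  -- receiver bounds
  have hrecv_U1 : ∀ v ∈ U1, (G.neighborFinset v ∩ W2).card ≤ b1 := by
    intro v hv
    obtain ⟨hvNx, _⟩ := mem_filter.mp hv
    obtain ⟨hxv, hvy, hnyv⟩ := (hNxMem v).mp hvNx
    have hvyd : G.dist v y = 2 :=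
      dist_two v x y hxv.symm hxy (fun hc => hnyv hc.symm) hvy
    have hb := hc2 v y hvyd
    have hxin : x ∈ G.neighborFinset v ∩ G.neighborFinset y := by
      simp only [mem_inter, SimpleGraph.mem_neighborFinset]
      exact ⟨hxv.symm, hxy.symm⟩
    have hsub : G.neighborFinset v ∩ W2 ⊆ (G.neighborFinset v ∩ G.neighborFinset y).erase x := by
      intro w hw
      obtain ⟨hw1, hw2⟩ := mem_inter.mp hw
      obtain ⟨hwNy, _⟩ := mem_filter.mp hw2
      obtain ⟨hyw, hwx, _⟩ := (hNyMem w).mp hwNy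
      rw [mem_erase, mem_inter, SimpleGraph.mem_neighborFinset, SimpleGraph.mem_neighborFinset]
      exact ⟨hwx, (SimpleGraph.mem_neighborFinset _ _ _).mp hw1, hyw⟩
    have := Finset.card_le_card hsub
    rw [Finset.card_erase_of_mem hxin, hb] at this
    omega
  have hrecv_D1 : ∀ v ∈ D1, (G.neighborFinset v ∩ W2).card ≤ a1 := by
    intro v hv
    obtain ⟨hvD, _⟩ := mem_filter.mp hv
    obtain ⟨hxv, hyv⟩ := (hDMem v).mp hvD
    have hb := hcadj v y hyv.symm
    have hxin : x ∈ G.neighborFinset v ∩ G.neighborFinset y := by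
      simp only [mem_inter, SimpleGraph.mem_neighborFinset]
      exact ⟨hxv.symm, hxy.symm⟩
    have hsub : G.neighborFinset v ∩ W2 ⊆ (G.neighborFinset v ∩ G.neighborFinset y).erase x := by
      intro w hw
      obtain ⟨hw1, hw2⟩ := mem_inter.mp hw
      obtain ⟨hwNy, _⟩ := mem_filter.mp hw2
      obtain ⟨hyw, hwx, _⟩ := (hNyMem w).mp hwNy
      rw [mem_erase, mem_inter, SimpleGraph.mem_neighborFinset, SimpleGraph.mem_neighborFinset]
      exact ⟨hwx, (SimpleGraph.mem_neighborFinset _ _ _).mp hw1, hyw⟩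
    have := Finset.card_le_card hsub
    rw [Finset.card_erase_of_mem hxin, hb] at this
    omega
  have hrecv_W0 : ∀ w ∈ W0, (G.neighborFinset w ∩ Um).card ≤ b1 := by
    intro w hw
    obtain ⟨hwNy, _⟩ := mem_filter.mp hw
    obtain ⟨hyw, hwx, hnxw⟩ := (hNyMem w).mp hwNy
    have hwxd : G.dist w x = 2 :=
      dist_two w y x hyw.symm hxy.symm (fun hc => hnxw hc.symm) hwx
    have hb := hc2 w x hwxd
    have hyin : y ∈ G.neighborFinset w ∩ G.neighborFinset x := by
      simp only [mem_inter, SimpleGraph.mem_neighborFinset]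
      exact ⟨hyw.symm, hxy⟩
    have hsub : G.neighborFinset w ∩ Um ⊆ (G.neighborFinset w ∩ G.neighborFinset x).erase y := by
      intro u hu
      obtain ⟨hu1, hu2⟩ := mem_inter.mp hu
      obtain ⟨huNx, _⟩ := mem_filter.mp hu2
      obtain ⟨hxu, huy, _⟩ := (hNxMem u).mp huNx
      rw [mem_erase, mem_inter, SimpleGraph.mem_neighborFinset, SimpleGraph.mem_neighborFinset]
      exact ⟨huy, (SimpleGraph.mem_neighborFinset _ _ _).mp hu1, hxu⟩
    have := Finset.card_le_card hsub
    rw [Finset.card_erase_of_mem hyin, hb] at this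
    omega
  have hrecv_D0 : ∀ v ∈ D0, (G.neighborFinset v ∩ Um).card ≤ a1 := by
    intro v hv
    obtain ⟨hvD, _⟩ := mem_filter.mp hv
    obtain ⟨hxv, hyv⟩ := (hDMem v).mp hvD
    have hb := hcadj v x hxv.symm
    have hyin : y ∈ G.neighborFinset v ∩ G.neighborFinset x := by
      simp only [mem_inter, SimpleGraph.mem_neighborFinset]
      exact ⟨hyv.symm, hxy⟩
    have hsub : G.neighborFinset v ∩ Um ⊆ (G.neighborFinset v ∩ G.neighborFinset x).erase y := by
      intro u hu
      obtain ⟨hu1, hu2⟩ := mem_inter.mp hu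
      obtain ⟨huNx, _⟩ := mem_filter.mp hu2
      obtain ⟨hxu, huy, _⟩ := (hNxMem u).mp huNx
      rw [mem_erase, mem_inter, SimpleGraph.mem_neighborFinset, SimpleGraph.mem_neighborFinset]
      exact ⟨huy, (SimpleGraph.mem_neighborFinset _ _ _).mp hu1, hxu⟩
    have := Finset.card_le_card hsub
    rw [Finset.card_erase_of_mem hyin, hb] at this
    omega
  -- double counting, first inequality
  have hdisjU1D1 : Disjoint U1 D1 := by
    rw [Finset.disjoint_left]
    intro v hv1 hv2
    exact ((hNxMem v).mp (mem_filter.mp hv1).1).2.2 ((hDMem v).mp (mem_filter.mp hv2).1).2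
  have hdisjW0D0 : Disjoint W0 D0 := by
    rw [Finset.disjoint_left]
    intro v hv1 hv2
    exact ((hNyMem v).mp (mem_filter.mp hv1).1).2.2 ((hDMem v).mp (mem_filter.mp hv2).1).1
  have hIneq1 : W2.card * b1 ≤ U1.card * b1 + D1.card * a1 := by
    have e1 : ∑ w ∈ W2, (G.neighborFinset w ∩ (U1 ∪ D1)).card = W2.card * b1 := by
      rw [Finset.sum_congr rfl hcount_w, Finset.sum_const, smul_eq_mul]
    have e2 := sum_card_nbr_inter_comm G W2 (U1 ∪ D1)
    rw [e1, Finset.sum_union hdisjU1D1] at e2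
    have e3 : ∑ v ∈ U1, (G.neighborFinset v ∩ W2).card ≤ U1.card * b1 := by
      have := Finset.sum_le_card_nsmul U1 (fun v => (G.neighborFinset v ∩ W2).card) b1 hrecv_U1
      simpa [smul_eq_mul] using this
    have e4 : ∑ v ∈ D1, (G.neighborFinset v ∩ W2).card ≤ D1.card * a1 := by
      have := Finset.sum_le_card_nsmul D1 (fun v => (G.neighborFinset v ∩ W2).card) a1 hrecv_D1
      simpa [smul_eq_mul] using this
    omega
  have hIneq2 : Um.card * b1 ≤ W0.card * b1 + D0.card * a1 := by
    have e1 : ∑ u ∈ Um, (G.neighborFinset u ∩ (W0 ∪ D0)).card = Um.card * b1 := by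
      rw [Finset.sum_congr rfl hcount_u, Finset.sum_const, smul_eq_mul]
    have e2 := sum_card_nbr_inter_comm G Um (W0 ∪ D0)
    rw [e1, Finset.sum_union hdisjW0D0] at e2
    have e3 : ∑ v ∈ W0, (G.neighborFinset v ∩ Um).card ≤ W0.card * b1 := by
      have := Finset.sum_le_card_nsmul W0 (fun v => (G.neighborFinset v ∩ Um).card) b1 hrecv_W0
      simpa [smul_eq_mul] using this
    have e4 : ∑ v ∈ D0, (G.neighborFinset v ∩ Um).card ≤ D0.card * a1 := by
      have := Finset.sum_le_card_nsmul D0 (fun v => (G.neighborFinset v ∩ Um).card) a1 hrecv_D0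
      simpa [smul_eq_mul] using this
    omega
  -- |D0| + |D1| ≤ a
  have hDsum : D1.card + D0.card ≤ a1 + 1 := by
    have hdisj : Disjoint D1 D0 := by
      rw [Finset.disjoint_left]
      intro v hv1 hv0
      have := (mem_filter.mp hv1).2
      have := (mem_filter.mp hv0).2
      omega
    have hsub : D1 ∪ D0 ⊆ D := by
      intro v hv
      rcases mem_union.mp hv with hv | hv
      · exact (mem_filter.mp hv).1
      · exact (mem_filter.mp hv).1
    have hcard := Finset.card_le_card hsub
    rw [Finset.card_union_of_disjoint hdisj] at hcard
    have : D.card = a1 + 1 := by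
      have := hcadj x y hxy
      simpa [hDdef, Delta] using this
    omega
  -- key inequality
  have hkey : W2.card + Um.card ≤ U1.card + W0.card + a1 := by
    have hb1pos : 0 < b1 := by omega
    have h3 : (W2.card + Um.card) * b1 ≤ (U1.card + W0.card + a1) * b1 := by
      have hD1a : D1.card * a1 + D0.card * a1 ≤ (a1 + 1) * a1 :=
        by
          have := Nat.mul_le_mul_right a1 hDsum
          nlinarith
      have haa : (a1 + 1) * a1 ≤ b1 * a1 := Nat.mul_le_mul_right a1 ha1b
      have hab : b1 * a1 ≤ a1 * b1 := by rw [Nat.mul_comm]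
      nlinarith
    exact Nat.le_of_mul_le_mul_right h3 hb1pos
  -- sums decompositions over neighborhoods
  have hDcomm : Delta G y x = D := by
    simp only [hDdef, Delta]
    rw [Finset.inter_comm]
  have hSy : ∑ z ∈ G.neighborFinset y, F z = F x + (∑ z ∈ D, F z + ∑ z ∈ Ny, F z) := by
    rw [nbhd_decomp G hxy.symm, Finset.sum_insert (notMem_DN G),
      Finset.sum_union (disj_DN G y x), hDcomm]
  have hSx : ∑ z ∈ G.neighborFinset x, F z = F y + (∑ z ∈ D, F z + ∑ z ∈ Nx, F z) := by
    rw [nbhd_decomp G hxy, Finset.sum_insert (notMem_DN G),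
      Finset.sum_union (disj_DN G x y)]
  -- level-set splitting of Ny and Nx
  have hNysplit : Ny = W0 ∪ W1 ∪ W2 := by
    ext w
    simp only [mem_union, hW0def, hW1def, hW2def, mem_filter]
    constructor
    · intro hw
      have := hNyRange w hw
      have h3 : F w = k ∨ F w = k + 1 ∨ F w = k + 2 := by omega
      tauto
    · rintro ((h | h) | h) <;> exact h.1
  have hNxsplit : Nx = Um ∪ U0 ∪ U1 := by
    ext u
    simp only [mem_union, hUmdef, hU0def, hU1def, mem_filter]
    constructor
    · intro hu
      have := hNxRange u hu
      have h3 : F u = k - 1 ∨ F u = k ∨ F u = k + 1 := by omega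
      tauto
    · rintro ((h | h) | h) <;> exact h.1
  have hdisjW01 : Disjoint W0 W1 := by
    rw [Finset.disjoint_left]; intro v h1 h2
    have := (mem_filter.mp h1).2; have := (mem_filter.mp h2).2; omega
  have hdisjW012 : Disjoint (W0 ∪ W1) W2 := by
    rw [Finset.disjoint_left]; intro v h1 h2
    have h2' := (mem_filter.mp h2).2
    rcases mem_union.mp h1 with h | h
    · have := (mem_filter.mp h).2; omega
    · have := (mem_filter.mp h).2; omega
  have hdisjU01 : Disjoint Um U0 := by
    rw [Finset.disjoint_left]; intro v h1 h2
    have := (mem_filter.mp h1).2; have := (mem_filter.mp h2).2; omega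
  have hdisjU012 : Disjoint (Um ∪ U0) U1 := by
    rw [Finset.disjoint_left]; intro v h1 h2
    have h2' := (mem_filter.mp h2).2
    rcases mem_union.mp h1 with h | h
    · have := (mem_filter.mp h).2; omega
    · have := (mem_filter.mp h).2; omega
  have hsumW : ∑ z ∈ Ny, F z
      = (W0.card : ℤ) * k + (W1.card : ℤ) * (k + 1) + (W2.card : ℤ) * (k + 2) := by
    rw [hNysplit, Finset.sum_union hdisjW012, Finset.sum_union hdisjW01]
    have e0 : ∑ z ∈ W0, F z = (W0.card : ℤ) * k := by
      rw [Finset.sum_congr rfl (fun w hw => (mem_filter.mp hw).2), Finset.sum_const,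
        nsmul_eq_mul]
    have e1 : ∑ z ∈ W1, F z = (W1.card : ℤ) * (k + 1) := by
      rw [Finset.sum_congr rfl (fun w hw => (mem_filter.mp hw).2), Finset.sum_const,
        nsmul_eq_mul]
    have e2 : ∑ z ∈ W2, F z = (W2.card : ℤ) * (k + 2) := by
      rw [Finset.sum_congr rfl (fun w hw => (mem_filter.mp hw).2), Finset.sum_const,
        nsmul_eq_mul]
    rw [e0, e1, e2]
  have hsumU : ∑ z ∈ Nx, F z
      = (Um.card : ℤ) * (k - 1) + (U0.card : ℤ) * k + (U1.card : ℤ) * (k + 1) := by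
    rw [hNxsplit, Finset.sum_union hdisjU012, Finset.sum_union hdisjU01]
    have e0 : ∑ z ∈ Um, F z = (Um.card : ℤ) * (k - 1) := by
      rw [Finset.sum_congr rfl (fun w hw => (mem_filter.mp hw).2), Finset.sum_const,
        nsmul_eq_mul]
    have e1 : ∑ z ∈ U0, F z = (U0.card : ℤ) * k := by
      rw [Finset.sum_congr rfl (fun w hw => (mem_filter.mp hw).2), Finset.sum_const,
        nsmul_eq_mul]
    have e2 : ∑ z ∈ U1, F z = (U1.card : ℤ) * (k + 1) := by
      rw [Finset.sum_congr rfl (fun w hw => (mem_filter.mp hw).2), Finset.sum_const,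
        nsmul_eq_mul]
    rw [e0, e1, e2]
  -- cardinalities
  have hcNy : W0.card + W1.card + W2.card = Ny.card := by
    rw [hNysplit, Finset.card_union_of_disjoint hdisjW012, Finset.card_union_of_disjoint hdisjW01]
  have hcNx : Um.card + U0.card + U1.card = Nx.card := by
    rw [hNxsplit, Finset.card_union_of_disjoint hdisjU012, Finset.card_union_of_disjoint hdisjU01]
  have hcardNy : Ny.card + (a1 + 1) + 1 = d := by
    have hDyx : (Delta G y x).card = a1 + 1 := by
      rw [hDcomm]
      have := hcadj x y hxy
      simpa [hDdef, Delta] using this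
    exact card_Nside_s13 G hxy.symm (hdeg y) hDyx
  have hcardNx : Nx.card + (a1 + 1) + 1 = d := by
    have hDxy : (Delta G x y).card = a1 + 1 := by
      have := hcadj x y hxy
      simpa [Delta] using this
    exact card_Nside_s13 G hxy (hdeg x) hDxy
  -- final arithmetic
  have hprod : (W0.card : ℤ) * k + (W1.card : ℤ) * k + (W2.card : ℤ) * k
      = (Um.card : ℤ) * k + (U0.card : ℤ) * k + (U1.card : ℤ) * k := by
    have hcc : (W0.card : ℤ) + W1.card + W2.card = (Um.card : ℤ) + U0.card + U1.card := by
      have h1 : Ny.card = Nx.card := by omega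
      push_cast [← hcNy, ← hcNx] at *
      exact_mod_cast congrArg (fun n : ℕ => (n : ℤ)) (by omega : W0.card + W1.card + W2.card = Um.card + U0.card + U1.card)
    linear_combination k * hcc
  have hkeyZ : (W2.card : ℤ) + (Um.card : ℤ) ≤ (U1.card : ℤ) + (W0.card : ℤ) + a1 := by
    exact_mod_cast hkey
  have hcNyZ : (W0.card : ℤ) + W1.card + W2.card + (a1 + 1) + 1 = d := by
    exact_mod_cast (by omega : W0.card + W1.card + W2.card + (a1+1) + 1 = d)
  rw [hSy, hSx, hsumW, hsumU, hstep]
  linarith [hprod, hkeyZ, hcNyZ]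


lemma sum_bound (hconn : G.Connected) (d a b : ℕ)
    (hreg : G.IsRegularOfDegree d)
    (hcadj : ∀ x y : V, G.Adj x y → (G.neighborFinset x ∩ G.neighborFinset y).card = a)
    (hc2 : ∀ x y : V, G.dist x y = 2 → (G.neighborFinset x ∩ G.neighborFinset y).card = b)
    (hba : a < b) (ha : 1 ≤ a) (x0 : V) :
    ∀ (j : ℕ) (v : V), G.dist x0 v = j →
      ∑ z ∈ G.neighborFinset v, (G.dist x0 z : ℤ) ≤ d + (G.dist x0 v : ℤ) * (d - 3) := by
  intro j
  induction j with
  | zero =>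
    intro v hv
    have hv0 : x0 = v := hconn.dist_eq_zero_iff.mp hv
    subst hv0
    rw [hv]
    have : ∑ z ∈ G.neighborFinset x0, (G.dist x0 z : ℤ) = (d : ℤ) := by
      have h1 : ∀ z ∈ G.neighborFinset x0, (G.dist x0 z : ℤ) = 1 := by
        intro z hz
        have : G.dist x0 z = 1 :=
          SimpleGraph.dist_eq_one_iff_adj.mpr ((SimpleGraph.mem_neighborFinset _ _ _).mp hz)
        rw [this]; norm_num
      rw [Finset.sum_congr rfl h1, Finset.sum_const, nsmul_eq_mul]
      have : (G.neighborFinset x0).card = d := hreg x0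
      rw [this]; ring
    rw [this]
    push_cast
    linarith
  | succ j ih =>
    intro v hv
    have hvne : v ≠ x0 := by
      intro hc; subst hc; rw [SimpleGraph.dist_self] at hv; omega
    obtain ⟨p, hp⟩ := hconn.exists_walk_length_eq_dist x0 v
    obtain ⟨u, hadj, q, hq⟩ := SimpleGraph.Walk.exists_eq_cons_of_ne hvne p.reverse
    have hqlen : q.length = j := by
      have := SimpleGraph.Walk.length_reverse p
      rw [hq] at this
      simp only [SimpleGraph.Walk.length_cons] at this
      omega
    have hud : G.dist x0 u = j := by
      have hle : G.dist x0 u ≤ j := by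
        rw [SimpleGraph.dist_comm]
        calc G.dist u x0 ≤ q.length := SimpleGraph.dist_le q
        _ = j := hqlen
      have hge : G.dist x0 v ≤ G.dist x0 u + G.dist u v := hconn.dist_triangle
      have huv : G.dist u v = 1 := SimpleGraph.dist_eq_one_iff_adj.mpr hadj.symm
      omega
    have hstep : (G.dist x0 v : ℤ) = (G.dist x0 u : ℤ) + 1 := by
      rw [hv, hud]; push_cast; ring
    have hlip : ∀ s t : V, G.Adj s t → (G.dist x0 s : ℤ) ≤ (G.dist x0 t : ℤ) + 1 := by
      intro s t hst
      have h1 : G.dist x0 s ≤ G.dist x0 t + G.dist t s := hconn.dist_triangle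
      have h2 : G.dist t s = 1 := SimpleGraph.dist_eq_one_iff_adj.mpr hst.symm
      rw [h2] at h1
      exact_mod_cast h1
    have hedge := edge_step G hconn d a b hreg hcadj hc2 hba ha hadj.symm
      (fun z => (G.dist x0 z : ℤ)) hlip hstep
    have hih := ih u hud
    rw [hv]
    rw [hud] at hih
    push_cast
    linarith


end Helpers

/-- Diameter bound: an amply regular graph with `β > α ≥ 1` has diameter at most
`⌊2d/3⌋`. -/
theorem stmt13 [Fintype V] [DecidableEq V] (G : SimpleGraph V) [DecidableRel G.Adj]
    (hconn : G.Connected) (n d α β : ℕ) (h : IsAmplyRegular G n d α β)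
    (hβα : α < β) (hα : 1 ≤ α) :
    ∀ x y : V, G.dist x y ≤ 2 * d / 3 := by
  obtain ⟨hn, hreg, hcadj, hc2⟩ := h
  intro x0 y0
  by_cases hL0 : G.dist x0 y0 = 0
  · rw [hL0]; exact Nat.zero_le _
  · have hS := sum_bound G hconn d α β hreg hcadj hc2 hβα hα x0 (G.dist x0 y0) y0 rfl
    have hlow : (d : ℤ) * ((G.dist x0 y0 : ℤ) - 1)
        ≤ ∑ z ∈ G.neighborFinset y0, (G.dist x0 z : ℤ) := by
      have h1 : ∀ z ∈ G.neighborFinset y0,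
          ((G.dist x0 y0 : ℤ) - 1) ≤ (G.dist x0 z : ℤ) := by
        intro z hz
        have hadj := (SimpleGraph.mem_neighborFinset _ _ _).mp hz
        have h2 : G.dist x0 y0 ≤ G.dist x0 z + G.dist z y0 := hconn.dist_triangle
        have hzv : G.dist z y0 = 1 := SimpleGraph.dist_eq_one_iff_adj.mpr hadj.symm
        rw [hzv] at h2
        have : (G.dist x0 y0 : ℤ) ≤ (G.dist x0 z : ℤ) + 1 := by exact_mod_cast h2
        linarith
      have hle := Finset.card_nsmul_le_sum (G.neighborFinset y0)
        (fun z => (G.dist x0 z : ℤ)) ((G.dist x0 y0 : ℤ) - 1) h1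
      have hdy : (G.neighborFinset y0).card = d := hreg y0
      rw [hdy] at hle
      simpa [nsmul_eq_mul] using hle
    have h3 : 3 * (G.dist x0 y0 : ℤ) ≤ 2 * d := by nlinarith [hS, hlow]
    have h4 : 3 * G.dist x0 y0 ≤ 2 * d := by exact_mod_cast h3
    rw [Nat.le_div_iff_mul_le (by norm_num : 0 < 3)]
    omega
end

section
/- Let G be an amply regular graph with parameters (n, d, α, β) with β ≥ α and β ≠ 1. Then diam(G) ≤ d. -/
variable {V : Type*}


open Finset SimpleGraph

section aux
variable [Fintype V] [DecidableEq V] {G : SimpleGraph V} [DecidableRel G.Adj]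

lemma adj_dist_le_one' {x y : V} (h : G.Adj x y) : G.dist x y ≤ 1 := by
  simpa using SimpleGraph.dist_le (SimpleGraph.Walk.cons h SimpleGraph.Walk.nil)

lemma dist_le_two' {x y z : V} (h1 : G.Adj x y) (h2 : G.Adj y z) : G.dist x z ≤ 2 := by
  simpa using SimpleGraph.dist_le (SimpleGraph.Walk.cons h1 (SimpleGraph.Walk.cons h2 SimpleGraph.Walk.nil))

lemma exists_prev (hconn : G.Connected) {x y : V} {i : ℕ} (hd : G.dist x y = i + 1) :
    ∃ w, G.Adj y w ∧ G.dist x w = i := by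
  have hne : y ≠ x := by
    rintro rfl
    rw [SimpleGraph.dist_self] at hd
    omega
  obtain ⟨p, hp⟩ := (hconn y x).exists_walk_length_eq_dist
  rw [SimpleGraph.dist_comm, hd] at hp
  obtain ⟨w, hadj, q, rfl⟩ := SimpleGraph.Walk.exists_eq_cons_of_ne hne p
  rw [SimpleGraph.Walk.length_cons] at hp
  refine ⟨w, hadj, le_antisymm ?_ ?_⟩
  · calc G.dist x w ≤ q.reverse.length := SimpleGraph.dist_le _
      _ = i := by rw [SimpleGraph.Walk.length_reverse]; omega
  · have ht := hconn.dist_triangle (u := x) (v := w) (w := y)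
    have : G.dist w y ≤ 1 := adj_dist_le_one' hadj.symm
    omega

lemma exists_dist_two (hconn : G.Connected) {x : V} :
    ∀ i (y : V), G.dist x y = i + 2 → ∃ z, G.dist x z = 2 := by
  intro i
  induction i with
  | zero => exact fun y hy => ⟨y, hy⟩
  | succ k ih =>
    intro y hy
    obtain ⟨w, _, hw⟩ := exists_prev hconn hy
    exact ih w hw

lemma main_count (hconn : G.Connected) {a b : ℕ} (hb2 : 2 ≤ b) (hab : a ≤ b)
    (hA : ∀ x y : V, G.Adj x y → (G.neighborFinset x ∩ G.neighborFinset y).card = a)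
    (hB : ∀ x y : V, G.dist x y = 2 → (G.neighborFinset x ∩ G.neighborFinset y).card = b) :
    ∀ i (x y : V), G.dist x y = i →
      i ≤ (G.neighborFinset y ∩ univ.filter (fun v => G.dist x v + 1 = i)).card := by
  intro i
  induction i with
  | zero => intro x y _; exact Nat.zero_le _
  | succ m ih =>
    intro x y hd
    obtain ⟨w, hyw, hw⟩ := exists_prev hconn hd
    have hwmem : w ∈ G.neighborFinset y ∩ univ.filter (fun v => G.dist x v + 1 = m + 1) := by
      simp [SimpleGraph.mem_neighborFinset, hyw, hw]
    rcases Nat.eq_zero_or_pos m with rfl | hm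
    · exact Nat.one_le_iff_ne_zero.mpr (Finset.card_ne_zero_of_mem hwmem)
    obtain ⟨k, rfl⟩ : ∃ k, m = k + 1 := ⟨m - 1, by omega⟩
    -- S : neighbors of w at distance k from x
    set S := G.neighborFinset w ∩ univ.filter (fun v => G.dist x v + 1 = k + 1) with hS
    set T := (G.neighborFinset y ∩ univ.filter (fun v => G.dist x v + 1 = k + 2)).erase w with hT
    have hScard : k + 1 ≤ S.card := ih x w hw
    have hSfacts : ∀ s ∈ S, G.Adj w s ∧ G.dist x s = k := by
      intro s hs
      rw [hS, Finset.mem_inter, SimpleGraph.mem_neighborFinset, Finset.mem_filter] at hs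
      exact ⟨hs.1, by omega⟩
    have hTfacts : ∀ t ∈ T, G.Adj y t ∧ G.dist x t = k + 1 ∧ t ≠ w := by
      intro t ht
      rw [hT, Finset.mem_erase, Finset.mem_inter, SimpleGraph.mem_neighborFinset,
        Finset.mem_filter] at ht
      exact ⟨ht.2.1, by omega, ht.1⟩
    -- lower bound per s
    have key1 : ∀ s ∈ S, b - 1 ≤ (T.filter (fun t => G.Adj s t)).card := by
      intro s hs
      obtain ⟨hws, hxs⟩ := hSfacts s hs
      have hsy : G.dist s y = 2 := by
        have h1 : G.dist s y ≤ 2 := dist_le_two' hws.symm hyw.symm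
        have h2 := hconn.dist_triangle (u := x) (v := s) (w := y)
        have h3 : G.dist s y ≠ 0 ∧ G.dist s y ≠ 1 := by constructor <;> intro h <;> omega
        omega
      have hcb := hB s y hsy
      have hwmem' : w ∈ G.neighborFinset s ∩ G.neighborFinset y := by
        simp [SimpleGraph.mem_neighborFinset, hws.symm, hyw]
      have hsub : (G.neighborFinset s ∩ G.neighborFinset y).erase w ⊆
          T.filter (fun t => G.Adj s t) := by
        intro z hz
        rw [Finset.mem_erase, Finset.mem_inter, SimpleGraph.mem_neighborFinset,
          SimpleGraph.mem_neighborFinset] at hz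
        obtain ⟨hzw, hsz, hyz⟩ := hz
        have hd1 : G.dist x z ≤ k + 1 := by
          have := hconn.dist_triangle (u := x) (v := s) (w := z)
          have := adj_dist_le_one' hsz
          omega
        have hd2 : k + 1 ≤ G.dist x z := by
          have := hconn.dist_triangle (u := x) (v := z) (w := y)
          have := adj_dist_le_one' hyz.symm
          omega
        rw [Finset.mem_filter, hT, Finset.mem_erase, Finset.mem_inter,
          SimpleGraph.mem_neighborFinset, Finset.mem_filter]
        exact ⟨⟨hzw, hyz, Finset.mem_univ _, by omega⟩, hsz⟩
      calc b - 1 = ((G.neighborFinset s ∩ G.neighborFinset y).erase w).card := by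
            rw [Finset.card_erase_of_mem hwmem', hcb]
        _ ≤ _ := Finset.card_le_card hsub
    -- upper bound per t
    have key2 : ∀ t ∈ T, (S.filter (fun s => G.Adj s t)).card ≤ b - 1 := by
      intro t ht
      obtain ⟨hyt, hxt, htw⟩ := hTfacts t ht
      have hymem : y ∈ G.neighborFinset t ∩ G.neighborFinset w := by
        simp [SimpleGraph.mem_neighborFinset, hyt.symm, hyw.symm]
      have hsub : S.filter (fun s => G.Adj s t) ⊆
          (G.neighborFinset t ∩ G.neighborFinset w).erase y := by
        intro s hs
        rw [Finset.mem_filter] at hs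
        obtain ⟨hws, hxs⟩ := hSfacts s hs.1
        rw [Finset.mem_erase, Finset.mem_inter, SimpleGraph.mem_neighborFinset,
          SimpleGraph.mem_neighborFinset]
        refine ⟨fun hE => ?_, hs.2.symm, hws⟩
        rw [hE] at hxs
        omega
      have hcard : (G.neighborFinset t ∩ G.neighborFinset w).card ≤ b := by
        by_cases hadj : G.Adj t w
        · rw [hA t w hadj]; exact hab
        · have htw2 : G.dist t w = 2 := by
            have h1 : G.dist t w ≤ 2 := dist_le_two' hyt.symm hyw
            have h0 : G.dist t w ≠ 0 := fun hE =>
              htw (hconn.dist_eq_zero_iff.mp hE)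
            have h1' : G.dist t w ≠ 1 := fun hE =>
              hadj (SimpleGraph.dist_eq_one_iff_adj.mp hE)
            omega
          rw [hB t w htw2]
      calc (S.filter (fun s => G.Adj s t)).card
          ≤ ((G.neighborFinset t ∩ G.neighborFinset w).erase y).card :=
            Finset.card_le_card hsub
        _ = (G.neighborFinset t ∩ G.neighborFinset w).card - 1 :=
            Finset.card_erase_of_mem hymem
        _ ≤ b - 1 := by omega
    -- double counting
    have hsum : ∑ s ∈ S, (T.filter (fun t => G.Adj s t)).card
        = ∑ t ∈ T, (S.filter (fun s => G.Adj s t)).card := by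
      simp_rw [Finset.card_filter]
      exact Finset.sum_comm
    have hle : (b - 1) * S.card ≤ (b - 1) * T.card := by
      calc (b - 1) * S.card = ∑ _s ∈ S, (b - 1) := by
            rw [Finset.sum_const, smul_eq_mul, mul_comm]
        _ ≤ ∑ s ∈ S, (T.filter (fun t => G.Adj s t)).card := Finset.sum_le_sum key1
        _ = ∑ t ∈ T, (S.filter (fun s => G.Adj s t)).card := hsum
        _ ≤ ∑ _t ∈ T, (b - 1) := Finset.sum_le_sum key2
        _ = (b - 1) * T.card := by rw [Finset.sum_const, smul_eq_mul, mul_comm]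
    have hST : S.card ≤ T.card := Nat.le_of_mul_le_mul_left hle (by omega)
    have := Finset.card_erase_add_one hwmem
    rw [← hT] at this
    omega

end aux

/-- Diameter bound: an amply regular graph with `β ≥ α` and `β ≠ 1` has diameter at
most `d`. -/
theorem stmt14 [Fintype V] [DecidableEq V] (G : SimpleGraph V) [DecidableRel G.Adj]
    (hconn : G.Connected) (n d α β : ℕ) (h : IsAmplyRegular G n d α β)
    (hβα : α ≤ β) (hβ : β ≠ 1) :
    ∀ x y : V, G.dist x y ≤ d := by
  obtain ⟨hn, hreg, hA, hB⟩ := h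
  intro x y
  rcases Nat.eq_zero_or_pos β with hb0 | hbpos
  · -- β = 0 : there are no pairs at distance 2, so the graph is complete
    have hd1 : G.dist x y ≤ 1 := by
      by_contra hc
      push_neg at hc
      obtain ⟨z, hz⟩ := exists_dist_two (G := G) (x := x) hconn (G.dist x y - 2) y (by omega)
      have hz' : G.dist x z = 1 + 1 := hz
      obtain ⟨w, hzw, hw⟩ := exists_prev hconn hz'
      have hxw := SimpleGraph.dist_eq_one_iff_adj.mp hw
      have hmem : w ∈ G.neighborFinset x ∩ G.neighborFinset z := by
        simp [SimpleGraph.mem_neighborFinset, hxw, hzw]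
      have hcard := hB x z hz
      rw [hb0] at hcard
      exact Finset.card_ne_zero_of_mem hmem hcard
    rcases Nat.lt_or_ge (G.dist x y) 1 with h1 | h1
    · omega
    · have hxy : G.Adj x y := SimpleGraph.dist_eq_one_iff_adj.mp (by omega)
      have : y ∈ G.neighborFinset x := by
        simp [SimpleGraph.mem_neighborFinset, hxy]
      have hd : 1 ≤ d := by
        rw [← hreg x, ← SimpleGraph.card_neighborFinset_eq_degree]
        exact Finset.card_pos.mpr ⟨y, this⟩
      omega
  · have hb2 : 2 ≤ β := by omega
    calc G.dist x y
        ≤ (G.neighborFinset y ∩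
            Finset.univ.filter (fun v => G.dist x v + 1 = G.dist x y)).card :=
          main_count hconn hb2 hβα hA hB (G.dist x y) x y rfl
      _ ≤ (G.neighborFinset y).card := Finset.card_le_card Finset.inter_subset_left
      _ = d := hreg y
end
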